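/- arXiv:2308.11791 — 6 statements merged into one kernel-verified Lean document; each statement's English description precedes it below -/
import Mathlib

section
/- Weak duality holds for the signed Schrödinger problem: for every nonnegative array 𝐏 on the product index set satisfying all signed marginal constraints Σ_{k : k_ℓ = j} X_k 𝐏_k = p^{(ℓ)}_j, and for every collection of dual variables λ = (λ^{(ℓ)}_j), one has g(λ) ≤ S(𝐏, 𝐐), where g(λ) = −Σ_k 𝐐_k · exp(−X_k · Σ_ℓ λ^{(ℓ)}_{k_ℓ}) − Σ_ℓ Σ_j λ^{(ℓ)}_j · p^{(ℓ)}_j. -/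
/-!
Each entry of the entropy dominates its Fenchel–Young lower bound
`a * u - q * exp u ≤ a * (log (a / q) - 1)`, applied with `u = -X_k Σ_ℓ λ^{(ℓ)}_{k_ℓ}`.
Summing over `k` and using the marginal constraints to rewrite the pairing
`Σ_k X_k 𝐏_k Σ_ℓ λ^{(ℓ)}_{k_ℓ}` as `Σ_ℓ Σ_j λ^{(ℓ)}_j p^{(ℓ)}_j` gives `g(λ) ≤ S(𝐏, 𝐐)`.
-/

open scoped BigOperators

namespace Real

theorem mul_sub_mul_exp_le_mul_log_div_sub_one {a q : ℝ} (u : ℝ) (ha : 0 ≤ a) (hq : 0 < q) :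
    a * u - q * exp u ≤ a * (log (a / q) - 1) := by
  rcases ha.eq_or_lt with rfl | ha
  · simpa using (mul_pos hq (exp_pos u)).le
  -- `log y ≤ y - 1` at `y = q exp u / a`, multiplied by `a`
  have hlog : log (q * exp u / a) ≤ q * exp u / a - 1 :=
    log_le_sub_one_of_pos (by positivity)
  rw [log_div (by positivity) ha.ne', log_mul hq.ne' (exp_pos u).ne', log_exp,
    le_sub_iff_add_le, le_div_iff₀ ha] at hlog
  rw [log_div ha.ne' hq.ne']
  nlinarith

end Real

section Marginal

variable {ι : Type*} [Fintype ι] [DecidableEq ι] {κ : ι → Type*} [∀ i, Fintype (κ i)]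
  [∀ i, DecidableEq (κ i)]

theorem sum_mul_sum_ite_apply_eq (i : ι) (c : κ i → ℝ) (f : (∀ i, κ i) → ℝ) :
    ∑ j, c j * ∑ k : ∀ i, κ i, (if k i = j then f k else 0) = ∑ k, f k * c (k i) := by
  simp_rw [Finset.mul_sum, mul_ite, mul_zero]
  rw [Finset.sum_comm]
  refine Finset.sum_congr rfl fun k _ => ?_
  rw [Finset.sum_ite_eq, if_pos (Finset.mem_univ _), mul_comm]

theorem sum_sum_mul_sum_ite_apply_eq (c : ∀ i, κ i → ℝ) (f : (∀ i, κ i) → ℝ) :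
    ∑ i, ∑ j, c i j * ∑ k : ∀ i, κ i, (if k i = j then f k else 0)
      = ∑ k, f k * ∑ i, c i (k i) := by
  simp_rw [sum_mul_sum_ite_apply_eq, Finset.mul_sum]
  exact Finset.sum_comm

end Marginal

theorem signed_schrodinger_weak_duality_general
    (n : ℕ) (I : Fin n → Type)
    [∀ ℓ, Fintype (I ℓ)] [∀ ℓ, DecidableEq (I ℓ)]
    (Q : (∀ ℓ, I ℓ) → ℝ) (hQ : ∀ k, 0 < Q k)
    (X : (∀ ℓ, I ℓ) → ℝ)
    (p : ∀ ℓ, I ℓ → ℝ)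
    (P : (∀ ℓ, I ℓ) → ℝ) (hP : ∀ k, 0 ≤ P k)
    (hmarg : ∀ (ℓ : Fin n) (j : I ℓ),
      ∑ k : ∀ ℓ, I ℓ, (if k ℓ = j then X k * P k else 0) = p ℓ j)
    (lam : ∀ ℓ, I ℓ → ℝ) :
    (-(∑ k : ∀ ℓ, I ℓ, Q k * Real.exp (-(X k) * ∑ ℓ, lam ℓ (k ℓ)))
        - ∑ ℓ, ∑ j, lam ℓ j * p ℓ j)
      ≤ ∑ k : ∀ ℓ, I ℓ, P k * (Real.log (P k / Q k) - 1) := by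
  have hpairing : ∑ ℓ, ∑ j, lam ℓ j * p ℓ j
      = ∑ k, X k * P k * ∑ ℓ, lam ℓ (k ℓ) := by
    simp_rw [← hmarg]
    exact sum_sum_mul_sum_ite_apply_eq lam fun k => X k * P k
  calc _ = ∑ k, (P k * (-(X k) * ∑ ℓ, lam ℓ (k ℓ))
              - Q k * Real.exp (-(X k) * ∑ ℓ, lam ℓ (k ℓ))) := by
        have hlinear : ∑ k, P k * (-(X k) * ∑ ℓ, lam ℓ (k ℓ))
            = -∑ k, X k * P k * ∑ ℓ, lam ℓ (k ℓ) := by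
          rw [← Finset.sum_neg_distrib]
          exact Finset.sum_congr rfl fun k _ => by ring
        rw [hpairing, Finset.sum_sub_distrib, hlinear]
        ring
    _ ≤ _ := Finset.sum_le_sum fun k _ =>
        Real.mul_sub_mul_exp_le_mul_log_div_sub_one _ (hP k) (hQ k)

/-- Weak duality for the signed Schrödinger problem: for every nonnegative
array `𝐏` satisfying all signed marginal constraints and every collection of dual
variables `λ`, one has `g(λ) ≤ S(𝐏, 𝐐)`. -/
theorem signed_schrodinger_weak_duality
    (n : ℕ) (hn : 1 ≤ n) (I : Fin n → Type)
    [∀ ℓ, Fintype (I ℓ)] [∀ ℓ, Nonempty (I ℓ)] [∀ ℓ, DecidableEq (I ℓ)]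
    (Q : (∀ ℓ, I ℓ) → ℝ) (hQ : ∀ k, 0 < Q k)
    (X : (∀ ℓ, I ℓ) → ℝ) (hX : ∀ k, X k = 1 ∨ X k = -1)
    (p : ∀ ℓ, I ℓ → ℝ)
    (P : (∀ ℓ, I ℓ) → ℝ) (hP : ∀ k, 0 ≤ P k)
    (hmarg : ∀ (ℓ : Fin n) (j : I ℓ),
      ∑ k : ∀ ℓ, I ℓ, (if k ℓ = j then X k * P k else 0) = p ℓ j)
    (lam : ∀ ℓ, I ℓ → ℝ) :
    (-(∑ k : ∀ ℓ, I ℓ, Q k * Real.exp (-(X k) * ∑ ℓ, lam ℓ (k ℓ)))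
        - ∑ ℓ, ∑ j, lam ℓ j * p ℓ j)
      ≤ ∑ k : ∀ ℓ, I ℓ, P k * (Real.log (P k / Q k) - 1) :=
  signed_schrodinger_weak_duality_general n I Q hQ X p P hP hmarg lam
end

section
/- Strong duality holds for the signed Schrödinger problem: assume the set of nonnegative arrays 𝐏 satisfying all signed marginal constraints Σ_{k : k_ℓ = j} X_k 𝐏_k = p^{(ℓ)}_j contains a strictly positive array (Slater's condition). Then the infimum of S(𝐏, 𝐐) over all feasible nonnegative 𝐏 equals the supremum over all dual variables λ = (λ^{(ℓ)}_j) of g(λ) = −Σ_k 𝐐_k · exp(−X_k · Σ_ℓ λ^{(ℓ)}_{k_ℓ}) − Σ_ℓ Σ_j λ^{(ℓ)}_j · p^{(ℓ)}_j, and the infimum is attained. -/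
open scoped BigOperators
open Finset

private lemma aux_lb (c x : ℝ) (hx : 0 ≤ x) :
    -Real.exp (c - 1) ≤ x * Real.log x - c * x := by
  rcases eq_or_lt_of_le hx with h | h
  · rw [← h]; simp; positivity
  · have h1 := Real.add_one_le_exp (c - 1 - Real.log x)
    have h2 : Real.exp (c - 1 - Real.log x) = Real.exp (c - 1) / x := by
      rw [Real.exp_sub, Real.exp_log h]
    have h3 : (c - Real.log x) * x ≤ Real.exp (c - 1) := by
      have h4 : c - Real.log x ≤ Real.exp (c - 1) / x := by rw [← h2]; linarith
      have := mul_le_mul_of_nonneg_right h4 hx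
      rwa [div_mul_cancel₀ _ (ne_of_gt h)] at this
    nlinarith

private lemma aux_grow (c x : ℝ) (h : Real.exp (c + 1) ≤ x) :
    x ≤ x * Real.log x - c * x := by
  have hx : 0 < x := lt_of_lt_of_le (Real.exp_pos _) h
  have h1 : c + 1 ≤ Real.log x := (Real.le_log_iff_exp_le hx).2 h
  nlinarith [mul_le_mul_of_nonneg_left h1 hx.le]

private def fnl {K : Type} [Fintype K] (w : K → ℝ) : (K → ℝ) →ₗ[ℝ] ℝ where
  toFun h := ∑ k, w k * h k
  map_add' a b := by simp [mul_add, Finset.sum_add_distrib]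
  map_smul' r a := by simp [Finset.mul_sum, mul_left_comm]

private lemma fnl_apply {K : Type} [Fintype K] (w h : K → ℝ) :
    fnl w h = ∑ k, w k * h k := rfl

private lemma fnl_single {K : Type} [Fintype K] [DecidableEq K] (w : K → ℝ) (k0 : K) :
    fnl w (Pi.single k0 1) = w k0 := by
  simp [fnl_apply, Pi.single_apply, mul_ite, Finset.sum_ite_eq']

private lemma master {K ι : Type} [Fintype K] [Nonempty K] [DecidableEq K] [Fintype ι]
    (Q : K → ℝ) (hQ : ∀ k, 0 < Q k) (c : ι → K → ℝ) (b : ι → ℝ)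
    (P0 : K → ℝ) (hP0 : ∀ k, 0 < P0 k) (hP0c : ∀ i, ∑ k, c i k * P0 k = b i) :
    ∃ (Pstar : K → ℝ) (μ : ι → ℝ),
      (∀ k, 0 < Pstar k) ∧
      (∀ i, ∑ k, c i k * Pstar k = b i) ∧
      (∀ k, Real.log (Pstar k / Q k) = ∑ i, μ i * c i k) ∧
      (∀ P : K → ℝ, (∀ k, 0 ≤ P k) → (∀ i, ∑ k, c i k * P k = b i) →
        ∑ k, (Pstar k * Real.log (Pstar k) - (Real.log (Q k) + 1) * Pstar k) ≤
        ∑ k, (P k * Real.log (P k) - (Real.log (Q k) + 1) * P k)) := by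
  classical
  set g : K → ℝ → ℝ := fun k x => x * Real.log x - (Real.log (Q k) + 1) * x with hg
  set f : (K → ℝ) → ℝ := fun P => ∑ k, g k (P k) with hf
  set F : Set (K → ℝ) :=
    {P | (∀ k, 0 ≤ P k) ∧ ∀ i, ∑ k, c i k * P k = b i} with hFdef
  have hf_cont : Continuous f := by
    apply continuous_finset_sum
    intro k _
    exact (Real.continuous_mul_log.comp (continuous_apply k)).sub
      (continuous_const.mul (continuous_apply k))
  have hF_closed : IsClosed F := by
    have h1 : IsClosed {P : K → ℝ | ∀ k, 0 ≤ P k} := by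
      have : {P : K → ℝ | ∀ k, 0 ≤ P k} = ⋂ k, {P | 0 ≤ P k} := by
        ext P; simp [Set.mem_iInter]
      rw [this]
      exact isClosed_iInter fun k => isClosed_le continuous_const (continuous_apply k)
    have h2 : IsClosed {P : K → ℝ | ∀ i, ∑ k, c i k * P k = b i} := by
      have : {P : K → ℝ | ∀ i, ∑ k, c i k * P k = b i}
          = ⋂ i, {P | ∑ k, c i k * P k = b i} := by
        ext P; simp [Set.mem_iInter]
      rw [this]
      refine isClosed_iInter fun i => isClosed_eq ?_ continuous_const
      exact continuous_finset_sum _ fun k _ => continuous_const.mul (continuous_apply k)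
    have : F = {P : K → ℝ | ∀ k, 0 ≤ P k} ∩ {P | ∀ i, ∑ k, c i k * P k = b i} := by
      ext P; simp [hFdef, Set.mem_setOf_eq, Set.mem_inter_iff]
    rw [this]; exact h1.inter h2
  -- constants
  obtain ⟨hne⟩ : Nonempty K := inferInstance
  set Cl : ℝ := univ.sup' univ_nonempty (fun k => Real.log (Q k) + 1) with hCl
  set E : ℝ := Real.exp (Cl - 1) with hE
  set N : ℝ := (Fintype.card K : ℝ) with hN
  set B : ℝ := f P0 with hB
  set M : ℝ := max (Real.exp (Cl + 1)) (max (B + N * E + 1) (univ.sup' univ_nonempty P0 + 1))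
    with hM
  have hE0 : 0 < E := Real.exp_pos _
  have hN0 : (0:ℝ) < N := by
    simp [hN, Nat.cast_pos, Fintype.card_pos]
  have hCl_le : ∀ k, Real.log (Q k) + 1 ≤ Cl := fun k => Finset.le_sup' (fun k => Real.log (Q k) + 1) (mem_univ k)
  -- pointwise bounds on g
  have hg_lb : ∀ k (x : ℝ), 0 ≤ x → -E ≤ g k x := by
    intro k x hx
    have := aux_lb (Real.log (Q k) + 1) x hx
    have h5 : Real.exp (Real.log (Q k) + 1 - 1) ≤ E := Real.exp_le_exp.2 (by linarith [hCl_le k])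
    simp only [hg]; linarith
  have hg_grow : ∀ k (x : ℝ), M ≤ x → M ≤ g k x := by
    intro k x hx
    have h6 : Real.exp (Real.log (Q k) + 1 + 1) ≤ x := by
      have : Real.exp (Real.log (Q k) + 1 + 1) ≤ Real.exp (Cl + 1) :=
        Real.exp_le_exp.2 (by linarith [hCl_le k])
      calc Real.exp (Real.log (Q k) + 1 + 1) ≤ Real.exp (Cl + 1) := this
        _ ≤ M := le_max_left _ _
        _ ≤ x := hx
    have := aux_grow (Real.log (Q k) + 1) x h6
    simp only [hg]; linarith
  -- coercivity
  have hcoer : ∀ P : K → ℝ, (∀ k, 0 ≤ P k) → (∃ k0, M < P k0) → B + 1 ≤ f P := by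
    intro P hPnn ⟨k0, hk0⟩
    have hsplit : f P = g k0 (P k0) + ∑ k ∈ univ.erase k0, g k (P k) :=
      (Finset.add_sum_erase univ (fun k => g k (P k)) (mem_univ k0)).symm
    have h7 : M ≤ g k0 (P k0) := hg_grow k0 _ hk0.le
    have h8 : -(N * E) ≤ ∑ k ∈ univ.erase k0, g k (P k) := by
      have h9 : ∑ k ∈ univ.erase k0, (-E) ≤ ∑ k ∈ univ.erase k0, g k (P k) :=
        Finset.sum_le_sum fun k _ => hg_lb k _ (hPnn k)
      have h10 : ∑ k ∈ univ.erase k0, (-E) = -(((univ.erase k0).card : ℝ) * E) := by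
        rw [Finset.sum_const]; push_cast; ring
      have h11 : ((univ.erase k0).card : ℝ) ≤ N := by
        simp only [hN]
        exact_mod_cast Finset.card_le_card (Finset.erase_subset _ _) |>.trans
          (le_of_eq (Finset.card_univ))
      nlinarith
    have hMB : B + N * E + 1 ≤ M := le_trans (le_max_left _ _) (le_max_right _ _)
    linarith [hsplit ▸ add_le_add h7 h8]
  -- compact minimization
  set Cs : Set (K → ℝ) := F ∩ Set.pi Set.univ (fun _ => Set.Icc (0:ℝ) M) with hCs
  have hCs_cpt : IsCompact Cs := (isCompact_univ_pi fun _ => isCompact_Icc).inter_left hF_closed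
  have hP0F : P0 ∈ F := ⟨fun k => (hP0 k).le, hP0c⟩
  have hP0M : ∀ k, P0 k ≤ M := by
    intro k
    have h1 : P0 k ≤ univ.sup' univ_nonempty P0 := Finset.le_sup' _ (mem_univ k)
    have h2 : univ.sup' univ_nonempty P0 + 1 ≤ M :=
      le_trans (le_max_right _ _) (le_max_right _ _)
    linarith
  have hP0Cs : P0 ∈ Cs := ⟨hP0F, fun k _ => ⟨(hP0 k).le, hP0M k⟩⟩
  obtain ⟨Pstar, hPsCs, hPsmin'⟩ := hCs_cpt.exists_isMinOn ⟨P0, hP0Cs⟩ hf_cont.continuousOn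
  have hPsmin : ∀ P ∈ Cs, f Pstar ≤ f P := fun P hP => hPsmin' hP
  have hPsF : Pstar ∈ F := hPsCs.1
  have hPs_nn : ∀ k, 0 ≤ Pstar k := hPsF.1
  have hmin : ∀ P ∈ F, f Pstar ≤ f P := by
    intro P hPF
    by_cases hcase : ∀ k, P k ≤ M
    · exact hPsmin P ⟨hPF, fun k _ => ⟨hPF.1 k, hcase k⟩⟩
    · push_neg at hcase
      obtain ⟨k0, hk0⟩ := hcase
      have h1 := hcoer P hPF.1 ⟨k0, hk0⟩
      have hfB : f Pstar ≤ B := hPsmin P0 hP0Cs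
      linarith
  -- positivity of the minimizer
  have hpos : ∀ k, 0 < Pstar k := by
    intro k0
    rcases (hPs_nn k0).lt_or_eq with h | h
    · exact h
    exfalso
    have hz : Pstar k0 = 0 := h.symm
    set a : ℝ := P0 k0 with ha
    have ha0 : 0 < a := hP0 k0
    set Δ : ℝ := f P0 - f Pstar with hΔ
    set t : ℝ := min (1/2) (Real.exp (-(|Δ| + 1) / a)) with ht
    have ht0 : 0 < t := lt_min (by norm_num) (Real.exp_pos _)
    have ht1 : t < 1 := lt_of_le_of_lt (min_le_left _ _) (by norm_num)
    have hlogt : Real.log t ≤ -(|Δ| + 1) / a := by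
      rw [Real.log_le_iff_le_exp ht0]
      exact min_le_right _ _
    have halogt : a * Real.log t ≤ -(|Δ| + 1) := by
      have h2 := mul_le_mul_of_nonneg_left hlogt ha0.le
      rwa [mul_div_cancel₀ _ ha0.ne'] at h2
    set Pt : K → ℝ := fun k => (1 - t) * Pstar k + t * P0 k with hPt
    have hPtF : Pt ∈ F := by
      constructor
      · intro k
        have := hPs_nn k
        have := (hP0 k).le
        simp only [hPt]
        nlinarith
      · intro i
        have h3 : ∑ k, c i k * Pt k
            = (1-t) * ∑ k, c i k * Pstar k + t * ∑ k, c i k * P0 k := by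
          rw [Finset.mul_sum, Finset.mul_sum, ← Finset.sum_add_distrib]
          refine Finset.sum_congr rfl fun k _ => ?_
          simp only [hPt]; ring
        rw [h3, hPsF.2 i, hP0c i]; ring
    have hconv : ∀ k, g k (Pt k) ≤ (1-t) * g k (Pstar k) + t * g k (P0 k)
        + (if k = k0 then t * (a * Real.log t) else 0) := by
      intro k
      by_cases hk : k = k0
      · subst hk
        have hPtk : Pt k = t * a := by simp only [hPt, hz, ha]; ring
        rw [if_pos rfl]
        have hlog2 : Real.log (t * a) = Real.log t + Real.log a :=
          Real.log_mul ht0.ne' ha0.ne'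
        simp only [hg, hPtk, hz, hlog2, mul_zero, zero_mul, sub_zero, Real.log_zero]
        apply le_of_eq; ring
      · rw [if_neg hk, add_zero]
        have hc := Real.convexOn_mul_log.2 (Set.mem_Ici.2 (hPs_nn k))
          (Set.mem_Ici.2 (hP0 k).le) (by linarith : (0:ℝ) ≤ 1 - t) ht0.le (by ring)
        simp only [smul_eq_mul] at hc
        simp only [hg, hPt]
        nlinarith [hc]
    have hfPt : f Pt ≤ (1-t) * f Pstar + t * f P0 + t * (a * Real.log t) := by
      have h4 : f Pt ≤ ∑ k, ((1-t) * g k (Pstar k) + t * g k (P0 k)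
          + (if k = k0 then t * (a * Real.log t) else 0)) :=
        Finset.sum_le_sum fun k _ => hconv k
      have h5 : ∑ k, ((1-t) * g k (Pstar k) + t * g k (P0 k)
          + (if k = k0 then t * (a * Real.log t) else 0))
          = (1-t) * f Pstar + t * f P0 + t * (a * Real.log t) := by
        rw [Finset.sum_add_distrib, Finset.sum_add_distrib, ← Finset.mul_sum,
          ← Finset.mul_sum, Finset.sum_ite_eq' univ k0, if_pos (mem_univ k0)]
      linarith
    have hfinal : f Pt < f Pstar := by
      nlinarith [halogt, ht0, le_abs_self Δ]
    exact absurd (hmin Pt hPtF) (not_le.2 hfinal)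
  -- gradient orthogonality
  have hgrad : ∀ h : K → ℝ, (∀ i, ∑ k, c i k * h k = 0) →
      ∑ k, Real.log (Pstar k / Q k) * h k = 0 := by
    intro h hh
    set m : ℝ := univ.inf' univ_nonempty Pstar with hm
    have hm0 : 0 < m := by
      rw [hm, Finset.lt_inf'_iff]
      exact fun k _ => hpos k
    set Hb : ℝ := univ.sup' univ_nonempty (fun k => |h k|) with hHb
    have hHb0 : (0:ℝ) ≤ Hb :=
      le_trans (abs_nonneg (h hne)) (Finset.le_sup' (fun k => |h k|) (mem_univ hne))
    set ε : ℝ := m / (Hb + 1) with hε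
    have hε0 : 0 < ε := div_pos hm0 (by linarith)
    have hfeas : ∀ s : ℝ, |s| < ε → (fun k => Pstar k + s * h k) ∈ F := by
      intro s hs
      constructor
      · intro k
        have h1 : |s * h k| ≤ |s| * Hb := by
          rw [abs_mul]
          exact mul_le_mul_of_nonneg_left (Finset.le_sup' (fun k => |h k|) (mem_univ k)) (abs_nonneg s)
        have h2 : |s| * Hb ≤ |s| * (Hb + 1) := by nlinarith [abs_nonneg s]
        have h3 : |s| * (Hb + 1) < ε * (Hb + 1) := by nlinarith [abs_nonneg s]
        have h4 : ε * (Hb + 1) = m := by rw [hε]; field_simp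
        have h5 : m ≤ Pstar k := Finset.inf'_le _ (mem_univ k)
        have h6 := neg_abs_le (s * h k)
        simp only []
        linarith
      · intro i
        have h7 : ∑ k, c i k * (Pstar k + s * h k)
            = ∑ k, c i k * Pstar k + s * ∑ k, c i k * h k := by
          rw [Finset.mul_sum, ← Finset.sum_add_distrib]
          refine Finset.sum_congr rfl fun k _ => ?_; ring
        rw [h7, hPsF.2 i, hh i]; ring
    have hlocal : IsLocalMin (fun s : ℝ => ∑ k, g k (Pstar k + s * h k)) 0 := by
      have hev : ∀ s ∈ Metric.ball (0:ℝ) ε,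
          (fun s : ℝ => ∑ k, g k (Pstar k + s * h k)) 0
            ≤ (fun s : ℝ => ∑ k, g k (Pstar k + s * h k)) s := by
        intro s hs
        rw [Metric.mem_ball, Real.dist_eq, sub_zero] at hs
        have h8 := hmin _ (hfeas s hs)
        simpa [hf] using h8
      exact Filter.eventually_of_mem (Metric.ball_mem_nhds 0 hε0) hev
    have hD : HasDerivAt (fun s : ℝ => ∑ k, g k (Pstar k + s * h k))
        (∑ k, Real.log (Pstar k / Q k) * h k) 0 := by
      apply HasDerivAt.fun_sum
      intro k _
      have hu : HasDerivAt (fun s : ℝ => Pstar k + s * h k) (h k) 0 := by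
        simpa using ((hasDerivAt_id (0:ℝ)).mul_const (h k)).const_add (Pstar k)
      have hxk : 0 < Pstar k := hpos k
      have hmul : HasDerivAt (fun x : ℝ => x * Real.log x)
          (Real.log (Pstar k) + 1) (Pstar k) := by
        have h8 : HasDerivAt (fun x : ℝ => x * Real.log x)
            (1 * Real.log (Pstar k) + Pstar k * (Pstar k)⁻¹) (Pstar k) :=
          (hasDerivAt_id (Pstar k)).mul (Real.hasDerivAt_log hxk.ne')
        convert h8 using 1
        rw [one_mul, mul_inv_cancel₀ hxk.ne']
      have h9 : HasDerivAt (fun x : ℝ => (Real.log (Q k) + 1) * x)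
          (Real.log (Q k) + 1) (Pstar k) := by
        simpa using (hasDerivAt_id (Pstar k)).const_mul (Real.log (Q k) + 1)
      have hgk : HasDerivAt (fun x : ℝ => x * Real.log x - (Real.log (Q k) + 1) * x)
          (Real.log (Pstar k) + 1 - (Real.log (Q k) + 1)) (Pstar k) := hmul.sub h9
      have h10 : ((fun s : ℝ => Pstar k + s * h k) 0) = Pstar k := by simp
      rw [← h10] at hgk
      have h11 := hgk.comp 0 hu
      have h12 : (Real.log (Pstar k) + 1 - (Real.log (Q k) + 1)) * h k
          = Real.log (Pstar k / Q k) * h k := by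
        rw [Real.log_div hxk.ne' (hQ k).ne']; ring
      rw [← h12]
      rw [h10] at h11
      exact h11
    exact hlocal.hasDerivAt_eq_zero hD
  -- Lagrange multipliers
  have hker : (⨅ i, LinearMap.ker (fnl (c i)))
      ≤ LinearMap.ker (fnl (fun k => Real.log (Pstar k / Q k))) := by
    intro h hh
    simp only [Submodule.mem_iInf, LinearMap.mem_ker, fnl_apply] at hh ⊢
    exact hgrad h hh
  have hspan := mem_span_of_iInf_ker_le_ker (L := fun i => fnl (c i)) hker
  obtain ⟨μ, hμ⟩ := (Submodule.mem_span_range_iff_exists_fun ℝ).1 hspan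
  refine ⟨Pstar, μ, hpos, hPsF.2, ?_, ?_⟩
  · intro k
    have h13 := congrArg (fun (L : (K → ℝ) →ₗ[ℝ] ℝ) => L (Pi.single k 1)) hμ
    simp only [LinearMap.coe_sum, Finset.sum_apply, LinearMap.smul_apply, smul_eq_mul,
      fnl_single] at h13
    exact h13.symm
  · intro P hPnn hPc
    have h14 := hmin P ⟨hPnn, hPc⟩
    simpa [hf, hg] using h14
/-- Strong duality for the signed Schrödinger problem: under Slater's
condition (a strictly positive feasible array exists), the infimum of `S(𝐏, 𝐐)` over
feasible nonnegative arrays is attained and equals the supremum of the dual functional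
`g(λ)` over all dual variables. -/
theorem signed_schrodinger_strong_duality
    (n : ℕ) (hn : 1 ≤ n) (I : Fin n → Type)
    [∀ ℓ, Fintype (I ℓ)] [∀ ℓ, Nonempty (I ℓ)] [∀ ℓ, DecidableEq (I ℓ)]
    (Q : (∀ ℓ, I ℓ) → ℝ) (hQ : ∀ k, 0 < Q k)
    (X : (∀ ℓ, I ℓ) → ℝ) (hX : ∀ k, X k = 1 ∨ X k = -1)
    (p : ∀ ℓ, I ℓ → ℝ)
    (hslater : ∃ P : (∀ ℓ, I ℓ) → ℝ, (∀ k, 0 < P k) ∧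
      ∀ (ℓ : Fin n) (j : I ℓ),
        ∑ k : ∀ ℓ, I ℓ, (if k ℓ = j then X k * P k else 0) = p ℓ j) :
    ∃ Pstar : (∀ ℓ, I ℓ) → ℝ,
      (∀ k, 0 ≤ Pstar k) ∧
      (∀ (ℓ : Fin n) (j : I ℓ),
        ∑ k : ∀ ℓ, I ℓ, (if k ℓ = j then X k * Pstar k else 0) = p ℓ j) ∧
      (∀ P : (∀ ℓ, I ℓ) → ℝ, (∀ k, 0 ≤ P k) →
        (∀ (ℓ : Fin n) (j : I ℓ),
          ∑ k : ∀ ℓ, I ℓ, (if k ℓ = j then X k * P k else 0) = p ℓ j) →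
        ∑ k : ∀ ℓ, I ℓ, Pstar k * (Real.log (Pstar k / Q k) - 1) ≤
          ∑ k : ∀ ℓ, I ℓ, P k * (Real.log (P k / Q k) - 1)) ∧
      ∑ k : ∀ ℓ, I ℓ, Pstar k * (Real.log (Pstar k / Q k) - 1) =
        ⨆ lam : ∀ ℓ, I ℓ → ℝ,
          (-(∑ k : ∀ ℓ, I ℓ, Q k * Real.exp (-(X k) * ∑ ℓ, lam ℓ (k ℓ)))
            - ∑ ℓ, ∑ j, lam ℓ j * p ℓ j) := by
  classical
  obtain ⟨P0, hP0pos, hP0c⟩ := hslater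
  haveI : Nonempty (∀ ℓ, I ℓ) := ⟨fun ℓ => Classical.arbitrary _⟩
  set c : ((ℓ : Fin n) × I ℓ) → (∀ ℓ, I ℓ) → ℝ :=
    fun i k => if k i.1 = i.2 then X k else 0 with hc
  set b : ((ℓ : Fin n) × I ℓ) → ℝ := fun i => p i.1 i.2 with hb
  have hconstr : ∀ (P : (∀ ℓ, I ℓ) → ℝ) (ℓ : Fin n) (j : I ℓ),
      ∑ k, c ⟨ℓ, j⟩ k * P k = ∑ k, (if k ℓ = j then X k * P k else 0) := by
    intro P ℓ j
    refine Finset.sum_congr rfl fun k _ => ?_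
    simp only [hc]
    split_ifs <;> ring
  have hP0c' : ∀ i, ∑ k, c i k * P0 k = b i := by
    rintro ⟨ℓ, j⟩
    rw [hconstr]; exact hP0c ℓ j
  obtain ⟨Pstar, μ, hpos, hPsc, hlogEq, hminf⟩ := master Q hQ c b P0 hP0pos hP0c'
  have obj_eq : ∀ P : (∀ ℓ, I ℓ) → ℝ,
      ∑ k, P k * (Real.log (P k / Q k) - 1)
        = ∑ k, (P k * Real.log (P k) - (Real.log (Q k) + 1) * P k) := by
    intro P
    refine Finset.sum_congr rfl fun k _ => ?_
    by_cases hk : P k = 0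
    · simp [hk]
    · rw [Real.log_div hk (hQ k).ne']; ring
  set lam : ∀ ℓ : Fin n, I ℓ → ℝ := fun ℓ j => -μ ⟨ℓ, j⟩ with hlam
  have hlog : ∀ k, Real.log (Pstar k / Q k) = -(X k) * ∑ ℓ, lam ℓ (k ℓ) := by
    intro k
    rw [hlogEq k, ← Finset.univ_sigma_univ, Finset.sum_sigma]
    simp only [hc, mul_ite, mul_zero]
    have h1 : ∀ ℓ : Fin n, ∑ j : I ℓ, (if k ℓ = j then μ ⟨ℓ, j⟩ * X k else 0)
        = μ ⟨ℓ, k ℓ⟩ * X k := by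
      intro ℓ
      rw [Finset.sum_ite_eq univ (k ℓ) (fun j => μ ⟨ℓ, j⟩ * X k), if_pos (mem_univ _)]
    rw [Finset.sum_congr rfl fun ℓ _ => h1 ℓ, Finset.mul_sum]
    exact Finset.sum_congr rfl fun ℓ _ => by simp only [hlam]; ring
  have hPs_exp : ∀ k, Pstar k = Q k * Real.exp (-(X k) * ∑ ℓ, lam ℓ (k ℓ)) := by
    intro k
    rw [← hlog k, Real.exp_log (div_pos (hpos k) (hQ k)), mul_comm,
      div_mul_cancel₀ _ (hQ k).ne']
  have hPsc' : ∀ (ℓ : Fin n) (j : I ℓ),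
      ∑ k, (if k ℓ = j then X k * Pstar k else 0) = p ℓ j := by
    intro ℓ j
    rw [← hconstr Pstar ℓ j]
    exact hPsc ⟨ℓ, j⟩
  have key1 : ∀ lam' : ∀ ℓ : Fin n, I ℓ → ℝ,
      ∑ ℓ, ∑ j, lam' ℓ j * p ℓ j = ∑ k, (X k * Pstar k) * ∑ ℓ, lam' ℓ (k ℓ) := by
    intro lam'
    calc ∑ ℓ, ∑ j, lam' ℓ j * p ℓ j
        = ∑ ℓ, ∑ j, ∑ k : (∀ ℓ, I ℓ), (if k ℓ = j then lam' ℓ j * (X k * Pstar k) else 0) := by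
          refine Finset.sum_congr rfl fun ℓ _ => Finset.sum_congr rfl fun j _ => ?_
          rw [← hPsc' ℓ j, Finset.mul_sum]
          exact Finset.sum_congr rfl fun k _ => by split_ifs <;> ring
      _ = ∑ ℓ, ∑ k : (∀ ℓ, I ℓ), ∑ j, (if k ℓ = j then lam' ℓ j * (X k * Pstar k) else 0) :=
          Finset.sum_congr rfl fun ℓ _ => Finset.sum_comm
      _ = ∑ ℓ, ∑ k : (∀ ℓ, I ℓ), lam' ℓ (k ℓ) * (X k * Pstar k) := by
          refine Finset.sum_congr rfl fun ℓ _ => Finset.sum_congr rfl fun k _ => ?_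
          rw [Finset.sum_ite_eq univ (k ℓ) (fun j => lam' ℓ j * (X k * Pstar k)),
            if_pos (mem_univ _)]
      _ = ∑ k : (∀ ℓ, I ℓ), (X k * Pstar k) * ∑ ℓ, lam' ℓ (k ℓ) := by
          rw [Finset.sum_comm]
          refine Finset.sum_congr rfl fun k _ => ?_
          rw [Finset.mul_sum]
          exact Finset.sum_congr rfl fun ℓ _ => by ring
  set S : ℝ := ∑ k, Pstar k * (Real.log (Pstar k / Q k) - 1) with hS
  set dg : (∀ ℓ : Fin n, I ℓ → ℝ) → ℝ := fun lam' =>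
    -(∑ k : ∀ ℓ, I ℓ, Q k * Real.exp (-(X k) * ∑ ℓ, lam' ℓ (k ℓ)))
      - ∑ ℓ, ∑ j, lam' ℓ j * p ℓ j with hdg
  have hsplit : ∀ lam' : ∀ ℓ : Fin n, I ℓ → ℝ, dg lam'
      = ∑ k : (∀ ℓ, I ℓ), (-(Q k * Real.exp (-(X k) * ∑ ℓ, lam' ℓ (k ℓ)))
          - (X k * Pstar k) * ∑ ℓ, lam' ℓ (k ℓ)) := by
    intro lam'
    simp only [hdg]
    rw [key1 lam', Finset.sum_sub_distrib, ← Finset.sum_neg_distrib]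
  have weak : ∀ lam' : ∀ ℓ : Fin n, I ℓ → ℝ, dg lam' ≤ S := by
    intro lam'
    rw [hsplit lam', hS]
    refine Finset.sum_le_sum fun k _ => ?_
    set T : ℝ := ∑ ℓ, lam' ℓ (k ℓ) with hT
    set A : ℝ := Q k * Real.exp (-(X k) * T) with hA
    have hA0 : 0 < A := by rw [hA]; exact mul_pos (hQ k) (Real.exp_pos _)
    have hlogA : Real.log A = Real.log (Q k) - X k * T := by
      rw [hA, Real.log_mul (hQ k).ne' (Real.exp_ne_zero _), Real.log_exp]; ring
    have h2 : Real.log (A / Pstar k) ≤ A / Pstar k - 1 :=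
      Real.log_le_sub_one_of_pos (div_pos hA0 (hpos k))
    have h3 : Real.log (A / Pstar k) = Real.log A - Real.log (Pstar k) :=
      Real.log_div hA0.ne' (hpos k).ne'
    have h2' : Real.log A - Real.log (Pstar k) ≤ A / Pstar k - 1 := h3 ▸ h2
    have h4 := mul_le_mul_of_nonneg_left h2' (hpos k).le
    have h4' : Pstar k * (A / Pstar k - 1) = A - Pstar k := by
      have hne := (hpos k).ne'
      field_simp
    rw [h4'] at h4
    have h5 : Real.log (Pstar k / Q k) = Real.log (Pstar k) - Real.log (Q k) :=
      Real.log_div (hpos k).ne' (hQ k).ne'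
    rw [h5]
    rw [hlogA] at h4
    nlinarith [h4]
  have hattain : dg lam = S := by
    rw [hsplit lam, hS]
    refine Finset.sum_congr rfl fun k _ => ?_
    rw [hlog k, ← hPs_exp k]
    ring
  have hbdd : BddAbove (Set.range dg) := by
    refine ⟨S, ?_⟩
    rintro x ⟨lam', rfl⟩
    exact weak lam'
  refine ⟨Pstar, fun k => (hpos k).le, hPsc', ?_, ?_⟩
  · intro P hPnn hPc
    rw [obj_eq Pstar, obj_eq P]
    refine hminf P hPnn ?_
    rintro ⟨ℓ, j⟩
    rw [hconstr P ℓ j]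
    exact hPc ℓ j
  · refine le_antisymm ?_ (ciSup_le weak)
    rw [← hS, ← hattain]
    exact le_ciSup hbdd lam
end

section
/- If the set of nonnegative arrays 𝐏 satisfying all signed marginal constraints Σ_{k : k_ℓ = j} X_k 𝐏_k = p^{(ℓ)}_j is nonempty, then the problem of minimizing S(𝐏, 𝐐) over this feasible set admits a minimizer, and the minimizer is unique. -/
/-!
Each summand `x ↦ x (log (x / q) - 1)` is continuous and strictly convex on `[0, ∞)`, bounded
below by `-q`, and dominates `x` once `x ≥ q e²`. Hence on the nonnegative orthant the
sublevel sets of the entropy are bounded, so it attains its minimum on the closed feasible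
polyhedron, and strict convexity of the sum makes that minimizer unique.
-/

open Set Real Bornology Filter InformationTheory

section Minimization

variable {E α : Type*} [PseudoMetricSpace E] [ProperSpace E] [LinearOrder α]
  [TopologicalSpace α] [ClosedIicTopology α]

theorem ContinuousOn.exists_isMinOn_of_isBounded_sublevel {f : E → α} {s : Set E} {x₀ : E}
    (hf : ContinuousOn f s) (hs : IsClosed s) (hx₀ : x₀ ∈ s)
    (hb : IsBounded {x ∈ s | f x ≤ f x₀}) : ∃ x ∈ s, IsMinOn f s x := by
  refine hf.exists_isMinOn' hs hx₀ ?_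
  rw [← Metric.cobounded_eq_cocompact]
  filter_upwards [mem_inf_of_left (isBounded_def.1 hb), mem_inf_of_right (mem_principal_self s)]
    with x hx hxs
  by_contra h
  exact hx ⟨hxs, (not_le.1 h).le⟩

end Minimization

theorem strictConvexOn_univ_pi_sum {ι 𝕜 β : Type*} {E : ι → Type*} [Fintype ι]
    [Semiring 𝕜] [PartialOrder 𝕜] [∀ i, AddCommMonoid (E i)] [∀ i, Module 𝕜 (E i)]
    [AddCommMonoid β] [PartialOrder β] [IsOrderedCancelAddMonoid β] [Module 𝕜 β]
    {s : ∀ i, Set (E i)} {g : ∀ i, E i → β} (hg : ∀ i, StrictConvexOn 𝕜 (s i) (g i)) :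
    StrictConvexOn 𝕜 (univ.pi s) fun x => ∑ i, g i (x i) := by
  refine ⟨convex_pi fun i _ => (hg i).1, fun x hx y hy hxy a b ha hb hab => ?_⟩
  obtain ⟨i, hi⟩ := Function.ne_iff.1 hxy
  simp only [Finset.smul_sum, ← Finset.sum_add_distrib]
  refine Finset.sum_lt_sum (fun j _ => ?_) ⟨i, Finset.mem_univ i, ?_⟩
  · exact (hg j).convexOn.2 (hx j trivial) (hy j trivial) ha.le hb.le hab
  · exact (hg i).2 (hx i trivial) (hy i trivial) hi ha hb hab

/-- Since `log 0 = 0` in Lean, `entropyTerm q 0 = 0`, matching the convention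
`0 (log 0 - 1) = 0`. -/
noncomputable def entropyTerm (q x : ℝ) : ℝ := x * (log (x / q) - 1)

section EntropyTerm

variable {q x : ℝ}

theorem entropyTerm_eq_mul_log_sub (hq : q ≠ 0) (x : ℝ) :
    entropyTerm q x = x * log x - (log q + 1) * x := by
  rcases eq_or_ne x 0 with rfl | hx
  · simp [entropyTerm]
  · rw [entropyTerm, log_div hx hq]; ring

theorem entropyTerm_eq_klFun (hq : q ≠ 0) (x : ℝ) :
    entropyTerm q x = q * klFun (x / q) - q := by
  rw [entropyTerm, klFun]; field_simp; ring

theorem continuous_entropyTerm (hq : q ≠ 0) : Continuous (entropyTerm q) := by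
  simp only [funext (entropyTerm_eq_klFun hq)]
  fun_prop

theorem strictConvexOn_entropyTerm (hq : q ≠ 0) : StrictConvexOn ℝ (Ici 0) (entropyTerm q) := by
  rw [funext (entropyTerm_eq_mul_log_sub hq)]
  exact strictConvexOn_mul_log.sub_concaveOn
    ((LinearMap.mul ℝ ℝ (log q + 1)).concaveOn (convex_Ici 0))

theorem neg_le_entropyTerm (hq : 0 < q) (hx : 0 ≤ x) : -q ≤ entropyTerm q x := by
  rw [entropyTerm_eq_klFun hq.ne']
  nlinarith [klFun_nonneg (div_nonneg hx hq.le)]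

theorem le_entropyTerm (hq : 0 < q) (hx : q * exp 2 ≤ x) : x ≤ entropyTerm q x := by
  have hx₀ : 0 < x := (mul_pos hq (exp_pos 2)).trans_le hx
  have : 2 ≤ log (x / q) := by
    rw [le_log_iff_exp_le (div_pos hx₀ hq), le_div_iff₀ hq, mul_comm]; exact hx
  rw [entropyTerm]; nlinarith

end EntropyTerm

noncomputable def entropy {ι : Type*} [Fintype ι] (Q P : ι → ℝ) : ℝ :=
  ∑ k, entropyTerm (Q k) (P k)

section Entropy

variable {ι : Type*} [Fintype ι] {Q : ι → ℝ}

theorem continuous_entropy (hQ : ∀ k, Q k ≠ 0) : Continuous (entropy Q) :=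
  continuous_finsetSum _ fun k _ => (continuous_entropyTerm (hQ k)).comp (continuous_apply k)

theorem strictConvexOn_entropy (hQ : ∀ k, Q k ≠ 0) :
    StrictConvexOn ℝ (Ici 0) (entropy Q) := by
  rw [← pi_univ_Ici]
  exact strictConvexOn_univ_pi_sum fun k => strictConvexOn_entropyTerm (hQ k)

theorem entropyTerm_le_entropy_add_sum (hQ : ∀ k, 0 < Q k) {P : ι → ℝ} (hP : 0 ≤ P)
    (k : ι) :
    entropyTerm (Q k) (P k) ≤ entropy Q P + ∑ k, Q k := by
  classical
  have hrest : -∑ k' ∈ Finset.univ.erase k, Q k' ≤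
      ∑ k' ∈ Finset.univ.erase k, entropyTerm (Q k') (P k') := by
    rw [← Finset.sum_neg_distrib]
    exact Finset.sum_le_sum fun k' _ => neg_le_entropyTerm (hQ k') (hP k')
  rw [entropy, ← Finset.add_sum_erase _ _ (Finset.mem_univ k),
    ← Finset.add_sum_erase _ _ (Finset.mem_univ k)]
  linarith [hQ k]

theorem isBounded_entropy_sublevel (hQ : ∀ k, 0 < Q k) (c : ℝ) :
    IsBounded {P ∈ Ici 0 | entropy Q P ≤ c} := by
  refine (Metric.isBounded_Icc 0 fun k => max (Q k * exp 2) (c + ∑ k, Q k)).subset ?_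
  rintro P ⟨hP, hPc⟩
  refine ⟨hP, fun k => ?_⟩
  by_contra! h
  have := le_entropyTerm (hQ k) (le_max_left _ _ |>.trans h.le)
  linarith [le_max_right (Q k * exp 2) (c + ∑ k, Q k), entropyTerm_le_entropy_add_sum hQ hP k]

theorem existsUnique_isMinOn_entropy (hQ : ∀ k, 0 < Q k) {C : Set (ι → ℝ)} (hC : IsClosed C)
    (hCv : Convex ℝ C) (hC₀ : C ⊆ Ici 0) (hne : C.Nonempty) :
    ∃! P, P ∈ C ∧ IsMinOn (entropy Q) C P := by
  obtain ⟨P₀, hP₀⟩ := hne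
  have hQ₀ k : Q k ≠ 0 := (hQ k).ne'
  obtain ⟨P, hP, hmin⟩ :=
    (continuous_entropy hQ₀).continuousOn.exists_isMinOn_of_isBounded_sublevel hC hP₀
      ((isBounded_entropy_sublevel hQ _).subset fun P hP => ⟨hC₀ hP.1, hP.2⟩)
  exact ⟨P, ⟨hP, hmin⟩, fun P' ⟨hP', hmin'⟩ =>
    ((strictConvexOn_entropy hQ₀).subset hC₀ hCv).eq_of_isMinOn hmin' hmin hP' hP⟩

end Entropy

section SignedMarginal

variable {ι : Type*} [Fintype ι] [DecidableEq ι] {I : ι → Type*} [∀ ℓ, Fintype (I ℓ)]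
  [∀ ℓ, DecidableEq (I ℓ)]

def signedMarginal (X : (∀ ℓ, I ℓ) → ℝ) (ℓ : ι) (j : I ℓ) :
    ((∀ ℓ, I ℓ) → ℝ) →ₗ[ℝ] ℝ where
  toFun P := ∑ k, if k ℓ = j then X k * P k else 0
  map_add' P P' := by
    rw [← Finset.sum_add_distrib]
    refine Finset.sum_congr rfl fun k _ => ?_
    split_ifs <;> simp [mul_add]
  map_smul' c P := by
    rw [RingHom.id_apply, smul_eq_mul, Finset.mul_sum]
    refine Finset.sum_congr rfl fun k _ => ?_
    split_ifs <;> simp [mul_left_comm]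

def signedFeasibleSet (X : (∀ ℓ, I ℓ) → ℝ) (p : ∀ ℓ, I ℓ → ℝ) :
    Set ((∀ ℓ, I ℓ) → ℝ) :=
  {P | 0 ≤ P ∧ ∀ ℓ j, signedMarginal X ℓ j P = p ℓ j}

variable (X : (∀ ℓ, I ℓ) → ℝ) (p : ∀ ℓ, I ℓ → ℝ)

theorem isClosed_signedFeasibleSet : IsClosed (signedFeasibleSet X p) := by
  simp only [signedFeasibleSet, ofPred_and, ofPred_forall]
  exact isClosed_Ici.inter <| isClosed_iInter fun ℓ => isClosed_iInter fun j =>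
    isClosed_eq (signedMarginal X ℓ j).continuous_of_finiteDimensional continuous_const

theorem convex_signedFeasibleSet : Convex ℝ (signedFeasibleSet X p) := by
  simp only [signedFeasibleSet, ofPred_and, ofPred_forall]
  exact (convex_Ici 0).inter <| convex_iInter fun ℓ => convex_iInter fun j =>
    convex_hyperplane (signedMarginal X ℓ j).isLinear _

end SignedMarginal

theorem signed_schrodinger_unique_minimizer_general
    (n : ℕ) (I : Fin n → Type)
    [∀ ℓ, Fintype (I ℓ)] [∀ ℓ, DecidableEq (I ℓ)]
    (Q : (∀ ℓ, I ℓ) → ℝ) (hQ : ∀ k, 0 < Q k)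
    (X : (∀ ℓ, I ℓ) → ℝ)
    (p : ∀ ℓ, I ℓ → ℝ)
    (hfeas : ∃ P : (∀ ℓ, I ℓ) → ℝ, (∀ k, 0 ≤ P k) ∧
      ∀ (ℓ : Fin n) (j : I ℓ),
        ∑ k : ∀ ℓ, I ℓ, (if k ℓ = j then X k * P k else 0) = p ℓ j) :
    ∃! Pstar : (∀ ℓ, I ℓ) → ℝ,
      (∀ k, 0 ≤ Pstar k) ∧
      (∀ (ℓ : Fin n) (j : I ℓ),
        ∑ k : ∀ ℓ, I ℓ, (if k ℓ = j then X k * Pstar k else 0) = p ℓ j) ∧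
      (∀ P : (∀ ℓ, I ℓ) → ℝ, (∀ k, 0 ≤ P k) →
        (∀ (ℓ : Fin n) (j : I ℓ),
          ∑ k : ∀ ℓ, I ℓ, (if k ℓ = j then X k * P k else 0) = p ℓ j) →
        ∑ k : ∀ ℓ, I ℓ, Pstar k * (Real.log (Pstar k / Q k) - 1) ≤
          ∑ k : ∀ ℓ, I ℓ, P k * (Real.log (P k / Q k) - 1)) := by
  obtain ⟨Pstar, ⟨⟨hnonneg, hmarg⟩, hmin⟩, huniq⟩ := existsUnique_isMinOn_entropy hQ
    (isClosed_signedFeasibleSet X p) (convex_signedFeasibleSet X p) (fun _ hP => hP.1) hfeas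
  refine ⟨Pstar, ⟨hnonneg, hmarg, fun P hP hPp => hmin ⟨hP, hPp⟩⟩, ?_⟩
  rintro P ⟨hP, hPp, hPmin⟩
  exact huniq P ⟨⟨hP, hPp⟩, fun P' hP' => hPmin P' hP'.1 hP'.2⟩

/-- If the feasible set of nonnegative arrays satisfying the signed
marginal constraints is nonempty, then the minimization of `S(𝐏, 𝐐)` over it admits
a unique minimizer. -/
theorem signed_schrodinger_unique_minimizer
    (n : ℕ) (hn : 1 ≤ n) (I : Fin n → Type)
    [∀ ℓ, Fintype (I ℓ)] [∀ ℓ, Nonempty (I ℓ)] [∀ ℓ, DecidableEq (I ℓ)]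
    (Q : (∀ ℓ, I ℓ) → ℝ) (hQ : ∀ k, 0 < Q k)
    (X : (∀ ℓ, I ℓ) → ℝ) (hX : ∀ k, X k = 1 ∨ X k = -1)
    (p : ∀ ℓ, I ℓ → ℝ)
    (hfeas : ∃ P : (∀ ℓ, I ℓ) → ℝ, (∀ k, 0 ≤ P k) ∧
      ∀ (ℓ : Fin n) (j : I ℓ),
        ∑ k : ∀ ℓ, I ℓ, (if k ℓ = j then X k * P k else 0) = p ℓ j) :
    ∃! Pstar : (∀ ℓ, I ℓ) → ℝ,
      (∀ k, 0 ≤ Pstar k) ∧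
      (∀ (ℓ : Fin n) (j : I ℓ),
        ∑ k : ∀ ℓ, I ℓ, (if k ℓ = j then X k * Pstar k else 0) = p ℓ j) ∧
      (∀ P : (∀ ℓ, I ℓ) → ℝ, (∀ k, 0 ≤ P k) →
        (∀ (ℓ : Fin n) (j : I ℓ),
          ∑ k : ∀ ℓ, I ℓ, (if k ℓ = j then X k * P k else 0) = p ℓ j) →
        ∑ k : ∀ ℓ, I ℓ, Pstar k * (Real.log (Pstar k / Q k) - 1) ≤
          ∑ k : ∀ ℓ, I ℓ, P k * (Real.log (P k / Q k) - 1)) :=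
  signed_schrodinger_unique_minimizer_general n I Q hQ X p hfeas
end

section
/- Verification theorem for the classical (positive) multi-marginal Schrödinger problem: let Q be an array with strictly positive entries and suppose there exist strictly positive scalars a^{(ℓ)}_j (for each ℓ ∈ {1,…,n} and j ∈ I_ℓ) such that the array P defined by P_k = Q_k · Π_{ℓ=1}^n a^{(ℓ)}_{k_ℓ} satisfies all marginal constraints Σ_{k : k_ℓ = j} P_k = p^{(ℓ)}_j. Then for every nonnegative array P' satisfying the same marginal constraints, S(P', Q) ≥ S(P, Q), with equality if and only if P' = P. -/
/-!
Write `S(P, Q) = ∑ₖ Pₖ (log (Pₖ / Qₖ) - 1)`. For `P > 0` one has, entry by entry,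
`S(P', Q) - S(P, Q) = ∑ₖ Pₖ klFun (P'ₖ / Pₖ) + ∑ₖ (P'ₖ - Pₖ) log (Pₖ / Qₖ)`,
where `klFun x = x log x + 1 - x ≥ 0` vanishes only at `x = 1`. For the Schrödinger scaling
`log (Pₖ / Qₖ) = ∑_ℓ log a^{(ℓ)}_{k_ℓ}` is a sum of functions of single coordinates, so the second
sum only sees the marginals of `P' - P`, which vanish.
-/

open Finset Real InformationTheory

section RelEntropy

variable {α : Type*} [Fintype α]

noncomputable def relEntropy (P Q : α → ℝ) : ℝ := ∑ k, P k * (log (P k / Q k) - 1)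

lemma mul_log_div_sub_one_sub {x y q : ℝ} (hx : 0 ≤ x) (hy : 0 < y) (hq : 0 < q) :
    x * (log (x / q) - 1) - y * (log (y / q) - 1) = y * klFun (x / y) + (x - y) * log (y / q) := by
  rcases hx.eq_or_lt with rfl | hx
  · simp only [zero_div, log_zero, zero_sub, mul_neg, mul_one, neg_zero, klFun_zero, neg_mul]
    ring
  · rw [klFun_apply, show log (x / q) = log (x / y) + log (y / q) by
      rw [log_div hx.ne' hq.ne', log_div hx.ne' hy.ne', log_div hy.ne' hq.ne']; ring]
    field_simp
    ring

lemma relEntropy_sub_relEntropy {P P' Q : α → ℝ} (hP' : ∀ k, 0 ≤ P' k) (hP : ∀ k, 0 < P k)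
    (hQ : ∀ k, 0 < Q k) :
    relEntropy P' Q - relEntropy P Q =
      ∑ k, P k * klFun (P' k / P k) + ∑ k, (P' k - P k) * log (P k / Q k) := by
  rw [relEntropy, relEntropy, ← sum_sub_distrib, ← sum_add_distrib]
  exact sum_congr rfl fun k _ => mul_log_div_sub_one_sub (hP' k) (hP k) (hQ k)

lemma sum_mul_klFun_div_nonneg {P P' : α → ℝ} (hP' : ∀ k, 0 ≤ P' k) (hP : ∀ k, 0 < P k) :
    0 ≤ ∑ k, P k * klFun (P' k / P k) :=
  sum_nonneg fun k _ => mul_nonneg (hP k).le (klFun_nonneg (div_nonneg (hP' k) (hP k).le))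

lemma sum_mul_klFun_div_eq_zero_iff {P P' : α → ℝ} (hP' : ∀ k, 0 ≤ P' k) (hP : ∀ k, 0 < P k) :
    ∑ k, P k * klFun (P' k / P k) = 0 ↔ P' = P := by
  have hterm : ∀ k, P k * klFun (P' k / P k) = 0 ↔ P' k = P k := fun k => by
    rw [mul_eq_zero, or_iff_right (hP k).ne', klFun_eq_zero_iff (div_nonneg (hP' k) (hP k).le),
      div_eq_one_iff_eq (hP k).ne']
  rw [sum_eq_zero_iff_of_nonneg fun k _ =>
      mul_nonneg (hP k).le (klFun_nonneg (div_nonneg (hP' k) (hP k).le)), funext_iff]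
  simp only [mem_univ, true_implies, hterm]

theorem relEntropy_le_and_eq_iff_of_sum_sub_mul_log_eq_zero {P P' Q : α → ℝ}
    (hP' : ∀ k, 0 ≤ P' k) (hP : ∀ k, 0 < P k) (hQ : ∀ k, 0 < Q k)
    (horth : ∑ k, (P' k - P k) * log (P k / Q k) = 0) :
    relEntropy P Q ≤ relEntropy P' Q ∧ (relEntropy P' Q = relEntropy P Q ↔ P' = P) := by
  have hsub := relEntropy_sub_relEntropy hP' hP hQ
  rw [horth, add_zero] at hsub
  refine ⟨sub_nonneg.mp (hsub ▸ sum_mul_klFun_div_nonneg hP' hP), ?_⟩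
  rw [← sub_eq_zero, hsub, sum_mul_klFun_div_eq_zero_iff hP' hP]

end RelEntropy

section Marginal

variable {ι : Type*} {I : ι → Type*} [Fintype ι] [DecidableEq ι] [∀ i, Fintype (I i)] [∀ i, DecidableEq (I i)]

def marginal (R : (∀ i, I i) → ℝ) (i : ι) (j : I i) : ℝ :=
  ∑ k, if k i = j then R k else 0

lemma sum_mul_apply_eq_sum_mul_marginal (R : (∀ i, I i) → ℝ) (i : ι) (g : I i → ℝ) :
    ∑ k, R k * g (k i) = ∑ j, g j * marginal R i j := by
  simp only [marginal, mul_sum, mul_ite, mul_zero]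
  rw [sum_comm]
  refine sum_congr rfl fun k _ => ?_
  rw [sum_ite_eq, if_pos (mem_univ _), mul_comm]

lemma sum_mul_sum_apply_eq_of_marginal_eq {R R' : (∀ i, I i) → ℝ}
    (hR : ∀ i j, marginal R i j = marginal R' i j) (f : ∀ i, I i → ℝ) :
    ∑ k, R k * ∑ i, f i (k i) = ∑ k, R' k * ∑ i, f i (k i) := by
  simp only [mul_sum]
  rw [sum_comm]
  refine Eq.trans (sum_congr rfl fun i _ => ?_) sum_comm
  rw [sum_mul_apply_eq_sum_mul_marginal R i (f i), sum_mul_apply_eq_sum_mul_marginal R' i (f i)]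
  simp only [hR]

end Marginal

theorem classical_schrodinger_verification_general
    (n : ℕ) (I : Fin n → Type)
    [∀ ℓ, Fintype (I ℓ)] [∀ ℓ, DecidableEq (I ℓ)]
    (Q : (∀ ℓ, I ℓ) → ℝ) (hQ : ∀ k, 0 < Q k)
    (p : ∀ ℓ, I ℓ → ℝ)
    (a : ∀ ℓ, I ℓ → ℝ) (ha : ∀ ℓ j, 0 < a ℓ j)
    (P : (∀ ℓ, I ℓ) → ℝ) (hPdef : ∀ k, P k = Q k * ∏ ℓ, a ℓ (k ℓ))
    (hPmarg : ∀ (ℓ : Fin n) (j : I ℓ),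
      ∑ k : ∀ ℓ, I ℓ, (if k ℓ = j then P k else 0) = p ℓ j) :
    ∀ P' : (∀ ℓ, I ℓ) → ℝ, (∀ k, 0 ≤ P' k) →
      (∀ (ℓ : Fin n) (j : I ℓ),
        ∑ k : ∀ ℓ, I ℓ, (if k ℓ = j then P' k else 0) = p ℓ j) →
      (∑ k : ∀ ℓ, I ℓ, P k * (Real.log (P k / Q k) - 1) ≤
          ∑ k : ∀ ℓ, I ℓ, P' k * (Real.log (P' k / Q k) - 1) ∧
        (∑ k : ∀ ℓ, I ℓ, P' k * (Real.log (P' k / Q k) - 1) =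
            ∑ k : ∀ ℓ, I ℓ, P k * (Real.log (P k / Q k) - 1) ↔ P' = P)) := by
  intro P' hP' hP'marg
  have hP : ∀ k, 0 < P k := fun k => by
    rw [hPdef]
    exact mul_pos (hQ k) (prod_pos fun ℓ _ => ha ℓ (k ℓ))
  have hlog : ∀ k, log (P k / Q k) = ∑ ℓ, log (a ℓ (k ℓ)) := fun k => by
    rw [hPdef, mul_div_cancel_left₀ _ (hQ k).ne', log_prod fun ℓ _ => (ha ℓ (k ℓ)).ne']
  have hmarg : ∀ ℓ j, marginal P' ℓ j = marginal P ℓ j := fun ℓ j =>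
    (hP'marg ℓ j).trans (hPmarg ℓ j).symm
  refine relEntropy_le_and_eq_iff_of_sum_sub_mul_log_eq_zero hP' hP hQ ?_
  simp only [hlog, sub_mul, sum_sub_distrib]
  exact sub_eq_zero.mpr (sum_mul_sum_apply_eq_of_marginal_eq hmarg fun ℓ j => log (a ℓ j))

/-- Verification theorem for the classical (positive) multi-marginal
Schrödinger problem: if `P_k = Q_k · Π_ℓ a^{(ℓ)}_{k_ℓ}` with strictly positive scalings
`a^{(ℓ)}_j` satisfies the marginal constraints, then `P` minimizes `S(·, Q)` over all
nonnegative arrays with the same marginals, and it is the unique minimizer. -/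
theorem classical_schrodinger_verification
    (n : ℕ) (hn : 1 ≤ n) (I : Fin n → Type)
    [∀ ℓ, Fintype (I ℓ)] [∀ ℓ, Nonempty (I ℓ)] [∀ ℓ, DecidableEq (I ℓ)]
    (Q : (∀ ℓ, I ℓ) → ℝ) (hQ : ∀ k, 0 < Q k)
    (p : ∀ ℓ, I ℓ → ℝ) (hp : ∀ ℓ j, 0 < p ℓ j)
    (a : ∀ ℓ, I ℓ → ℝ) (ha : ∀ ℓ j, 0 < a ℓ j)
    (P : (∀ ℓ, I ℓ) → ℝ) (hPdef : ∀ k, P k = Q k * ∏ ℓ, a ℓ (k ℓ))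
    (hPmarg : ∀ (ℓ : Fin n) (j : I ℓ),
      ∑ k : ∀ ℓ, I ℓ, (if k ℓ = j then P k else 0) = p ℓ j) :
    ∀ P' : (∀ ℓ, I ℓ) → ℝ, (∀ k, 0 ≤ P' k) →
      (∀ (ℓ : Fin n) (j : I ℓ),
        ∑ k : ∀ ℓ, I ℓ, (if k ℓ = j then P' k else 0) = p ℓ j) →
      (∑ k : ∀ ℓ, I ℓ, P k * (Real.log (P k / Q k) - 1) ≤
          ∑ k : ∀ ℓ, I ℓ, P' k * (Real.log (P' k / Q k) - 1) ∧
        (∑ k : ∀ ℓ, I ℓ, P' k * (Real.log (P' k / Q k) - 1) =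
            ∑ k : ∀ ℓ, I ℓ, P k * (Real.log (P k / Q k) - 1) ↔ P' = P)) :=
  classical_schrodinger_verification_general n I Q hQ p a ha P hPdef hPmarg
end

section
/- The generalized Sinkhorn coordinate update enforces its marginal constraint exactly: fix ℓ ∈ {1,…,n} and j ∈ I_ℓ, and fix strictly positive scalars α^{(m)}_i for all coordinates (m, i) ≠ (ℓ, j). Define S⁺ = Σ_{k : k_ℓ = j, X_k = +1} 𝐐_k · Π_{m ≠ ℓ} α^{(m)}_{k_m} and S⁻ = Σ_{k : k_ℓ = j, X_k = −1} 𝐐_k · Π_{m ≠ ℓ} (α^{(m)}_{k_m})^{−1}, and suppose S⁺ > 0. If α^{(ℓ)}_j is set equal to G(S⁺, S⁻, p^{(ℓ)}_j) = (p^{(ℓ)}_j + √((p^{(ℓ)}_j)² + 4·S⁺·S⁻))/(2·S⁺), then the array P defined by P_k = X_k·𝐐_k·Π_{m=1}^n (α^{(m)}_{k_m})^{X_k} satisfies Σ_{k : k_ℓ = j} P_k = p^{(ℓ)}_j. -/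
/-!
Only the factor `α^{(ℓ)}_j` of the product depends on the updated coordinate, so the marginal
at `(ℓ, j)` equals `a S⁺ - a⁻¹ S⁻` with `a = α^{(ℓ)}_j`. The value `G(S⁺, S⁻, p)` is the positive
root of `S⁺ a² - p a - S⁻ = 0`, and dividing that equation by `a` gives `a S⁺ - a⁻¹ S⁻ = p`.
-/

open Finset

lemma mul_sub_inv_mul_eq_of_eq_quadratic_root {a p s t : ℝ} (hs : 0 < s) (ht : 0 ≤ t)
    (ha : 0 < a) (hroot : a = (p + √(p ^ 2 + 4 * s * t)) / (2 * s)) :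
    a * s - a⁻¹ * t = p := by
  have hsqrt : √(p ^ 2 + 4 * s * t) = 2 * s * a - p := by
    rw [hroot]; field_simp; ring
  have hquad : s * a ^ 2 - p * a - t = 0 := by
    have h := Real.sq_sqrt (by positivity : 0 ≤ p ^ 2 + 4 * s * t)
    rw [hsqrt] at h
    nlinarith
  field_simp
  linarith

lemma sign_mul_ite_mul_eq {x : ℝ} (hx : x = 1 ∨ x = -1) (q a r : ℝ) :
    x * q * (if x = 1 then a * r else (a * r)⁻¹) =
      a * (if x = 1 then q * r else 0) - a⁻¹ * (if x = -1 then q * r⁻¹ else 0) := by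
  rcases hx with rfl | rfl
  · norm_num
    ring
  · norm_num [mul_inv]
    ring

section Marginal

variable {ι : Type*} [Fintype ι] [DecidableEq ι] {I : ι → Type*}
  [∀ i, Fintype (I i)] [∀ i, DecidableEq (I i)]

lemma sum_marginal_eq_mul_sub_inv_mul (Q X : (∀ i, I i) → ℝ) (hX : ∀ k, X k = 1 ∨ X k = -1)
    (ℓ₀ : ι) (j₀ : I ℓ₀) (α : ∀ i, I i → ℝ) :
    ∑ k : ∀ i, I i,
      (if k ℓ₀ = j₀ then
        X k * Q k * (if X k = 1 then ∏ m, α m (k m) else (∏ m, α m (k m))⁻¹)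
      else 0) =
      α ℓ₀ j₀ * ∑ k : ∀ i, I i,
        (if k ℓ₀ = j₀ ∧ X k = 1 then Q k * ∏ m ∈ univ.erase ℓ₀, α m (k m) else 0) -
      (α ℓ₀ j₀)⁻¹ * ∑ k : ∀ i, I i,
        (if k ℓ₀ = j₀ ∧ X k = -1 then Q k * ∏ m ∈ univ.erase ℓ₀, (α m (k m))⁻¹ else 0) := by
  rw [mul_sum, mul_sum, ← sum_sub_distrib]
  refine sum_congr rfl fun k _ => ?_
  by_cases hk : k ℓ₀ = j₀
  · subst hk
    simp only [true_and, if_true, ← mul_prod_erase univ (fun m => α m (k m)) (mem_univ ℓ₀),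
      prod_inv_distrib]
    exact sign_mul_ite_mul_eq (hX k) _ _ _
  · simp [hk]

end Marginal

theorem generalized_sinkhorn_coordinate_update_enforces_marginal_general
    (n : ℕ) (I : Fin n → Type)
    [∀ ℓ, Fintype (I ℓ)] [∀ ℓ, DecidableEq (I ℓ)]
    (Q : (∀ ℓ, I ℓ) → ℝ) (hQ : ∀ k, 0 < Q k)
    (X : (∀ ℓ, I ℓ) → ℝ) (hX : ∀ k, X k = 1 ∨ X k = -1)
    (ℓ₀ : Fin n) (j₀ : I ℓ₀) (pval : ℝ)
    (α : ∀ m, I m → ℝ) (hα : ∀ m i, 0 < α m i)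
    (hSp : 0 < ∑ k : ∀ ℓ, I ℓ,
      (if k ℓ₀ = j₀ ∧ X k = 1 then
        Q k * ∏ m ∈ Finset.univ.erase ℓ₀, α m (k m) else 0))
    (hupd : α ℓ₀ j₀ =
      (pval + Real.sqrt (pval ^ 2 +
        4 * (∑ k : ∀ ℓ, I ℓ,
          (if k ℓ₀ = j₀ ∧ X k = 1 then
            Q k * ∏ m ∈ Finset.univ.erase ℓ₀, α m (k m) else 0)) *
          (∑ k : ∀ ℓ, I ℓ,
            (if k ℓ₀ = j₀ ∧ X k = -1 then
              Q k * ∏ m ∈ Finset.univ.erase ℓ₀, (α m (k m))⁻¹ else 0)))) /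
      (2 * ∑ k : ∀ ℓ, I ℓ,
        (if k ℓ₀ = j₀ ∧ X k = 1 then
          Q k * ∏ m ∈ Finset.univ.erase ℓ₀, α m (k m) else 0))) :
    ∑ k : ∀ ℓ, I ℓ,
      (if k ℓ₀ = j₀ then
        X k * Q k * (if X k = 1 then ∏ m, α m (k m) else (∏ m, α m (k m))⁻¹)
      else 0) = pval := by
  have hSm : 0 ≤ ∑ k : ∀ ℓ, I ℓ,
      (if k ℓ₀ = j₀ ∧ X k = -1 then
        Q k * ∏ m ∈ Finset.univ.erase ℓ₀, (α m (k m))⁻¹ else 0) :=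
    sum_nonneg fun k _ => by
      split_ifs
      · exact mul_nonneg (hQ k).le (prod_nonneg fun m _ => inv_nonneg.2 (hα m (k m)).le)
      · rfl
  rw [sum_marginal_eq_mul_sub_inv_mul Q X hX ℓ₀ j₀ α]
  exact mul_sub_inv_mul_eq_of_eq_quadratic_root hSp hSm (hα ℓ₀ j₀) hupd

/-- The generalized Sinkhorn coordinate update enforces its marginal
constraint exactly: with `S⁺`, `S⁻` the positive- and negative-sign partial sums of
the scaled prior at coordinate `(ℓ, j)`, `S⁺ > 0`, and
`α^{(ℓ)}_j = G(S⁺, S⁻, p^{(ℓ)}_j) = (p + √(p² + 4·S⁺·S⁻))/(2·S⁺)`, the array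
`P_k = X_k·𝐐_k·Π_m (α^{(m)}_{k_m})^{X_k}` satisfies `Σ_{k : k_ℓ = j} P_k = p^{(ℓ)}_j`. -/
theorem generalized_sinkhorn_coordinate_update_enforces_marginal
    (n : ℕ) (hn : 1 ≤ n) (I : Fin n → Type)
    [∀ ℓ, Fintype (I ℓ)] [∀ ℓ, Nonempty (I ℓ)] [∀ ℓ, DecidableEq (I ℓ)]
    (Q : (∀ ℓ, I ℓ) → ℝ) (hQ : ∀ k, 0 < Q k)
    (X : (∀ ℓ, I ℓ) → ℝ) (hX : ∀ k, X k = 1 ∨ X k = -1)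
    (ℓ₀ : Fin n) (j₀ : I ℓ₀) (pval : ℝ) (hpval : 0 < pval)
    (α : ∀ m, I m → ℝ) (hα : ∀ m i, 0 < α m i)
    (hSp : 0 < ∑ k : ∀ ℓ, I ℓ,
      (if k ℓ₀ = j₀ ∧ X k = 1 then
        Q k * ∏ m ∈ Finset.univ.erase ℓ₀, α m (k m) else 0))
    (hupd : α ℓ₀ j₀ =
      (pval + Real.sqrt (pval ^ 2 +
        4 * (∑ k : ∀ ℓ, I ℓ,
          (if k ℓ₀ = j₀ ∧ X k = 1 then
            Q k * ∏ m ∈ Finset.univ.erase ℓ₀, α m (k m) else 0)) *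
          (∑ k : ∀ ℓ, I ℓ,
            (if k ℓ₀ = j₀ ∧ X k = -1 then
              Q k * ∏ m ∈ Finset.univ.erase ℓ₀, (α m (k m))⁻¹ else 0)))) /
      (2 * ∑ k : ∀ ℓ, I ℓ,
        (if k ℓ₀ = j₀ ∧ X k = 1 then
          Q k * ∏ m ∈ Finset.univ.erase ℓ₀, α m (k m) else 0))) :
    ∑ k : ∀ ℓ, I ℓ,
      (if k ℓ₀ = j₀ then
        X k * Q k * (if X k = 1 then ∏ m, α m (k m) else (∏ m, α m (k m))⁻¹)
      else 0) = pval :=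
  generalized_sinkhorn_coordinate_update_enforces_marginal_general n I Q hQ X hX ℓ₀ j₀ pval α hα hSp
    hupd
end

section
/- Linear convergence of the generalized Sinkhorn algorithm: assume the set of nonnegative arrays 𝐏 satisfying all signed marginal constraints Σ_{k : k_ℓ = j} X_k 𝐏_k = p^{(ℓ)}_j contains a strictly positive array, and let g* denote the (attained) maximum of the dual functional g(λ) = −Σ_k 𝐐_k · exp(−X_k · Σ_ℓ λ^{(ℓ)}_{k_ℓ}) − Σ_ℓ Σ_j λ^{(ℓ)}_j · p^{(ℓ)}_j. Define the iteration in which one sweep updates, cyclically in a fixed order over all coordinates (ℓ, j), the variable λ^{(ℓ)}_j to the unique maximizer of g with all other coordinates held fixed (equivalently, sets e^{−λ^{(ℓ)}_j} = G(S⁺_{ℓ,j}, S⁻_{ℓ,j}, p^{(ℓ)}_j) where S⁺_{ℓ,j}, S⁻_{ℓ,j} are the positive- and negative-sign partial sums of the currently scaled prior). Then the sequence λ^{(t)} of iterates produced from any starting point converges at a linear rate in dual value: there exist constants C ≥ 0 and ρ ∈ [0, 1) such that g* − g(λ^{(t)}) ≤ C·ρ^{t} for all t. -/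
open scoped BigOperators

noncomputable section

/-- The generalized Sinkhorn scaling factor `G(S⁺, S⁻, p)`, the unique positive root of
`S⁺·α² − p·α − S⁻ = 0`. -/
def GSink (Sp Sm p : ℝ) : ℝ := (p + Real.sqrt (p ^ 2 + 4 * Sp * Sm)) / (2 * Sp)

variable {n : ℕ} {I : Fin n → Type}

/-- The dual functional `g(λ)` of the signed Schrödinger problem, with the dual
variables `λ^{(ℓ)}_j` indexed by coordinates `⟨ℓ, j⟩ : Σ ℓ, I ℓ`. -/
def dualG [∀ ℓ, Fintype (I ℓ)] (Q X : (∀ ℓ, I ℓ) → ℝ) (p : ∀ ℓ, I ℓ → ℝ)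
    (lam : (Σ ℓ : Fin n, I ℓ) → ℝ) : ℝ :=
  -(∑ k : ∀ ℓ, I ℓ, Q k * Real.exp (-(X k) * ∑ ℓ, lam ⟨ℓ, k ℓ⟩))
    - ∑ ℓ, ∑ j, lam ⟨ℓ, j⟩ * p ℓ j

/-- The positive-sign partial sum `S⁺_{ℓ,j}` of the currently scaled prior, where the
current scalings are `α^{(m)}_i = e^{−λ^{(m)}_i}`, so that
`Π_{m ≠ ℓ} α^{(m)}_{k_m} = exp(−Σ_{m ≠ ℓ} λ^{(m)}_{k_m})`. -/
def Splus [∀ ℓ, Fintype (I ℓ)] [∀ ℓ, DecidableEq (I ℓ)]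
    (Q X : (∀ ℓ, I ℓ) → ℝ) (lam : (Σ ℓ : Fin n, I ℓ) → ℝ)
    (ℓ : Fin n) (j : I ℓ) : ℝ :=
  ∑ k : ∀ m, I m, if k ℓ = j ∧ X k = 1 then
    Q k * Real.exp (-∑ m ∈ Finset.univ.erase ℓ, lam ⟨m, k m⟩) else 0

/-- The negative-sign partial sum `S⁻_{ℓ,j}` of the currently scaled prior, involving
`Π_{m ≠ ℓ} (α^{(m)}_{k_m})⁻¹ = exp(Σ_{m ≠ ℓ} λ^{(m)}_{k_m})`. -/
def Sminus [∀ ℓ, Fintype (I ℓ)] [∀ ℓ, DecidableEq (I ℓ)]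
    (Q X : (∀ ℓ, I ℓ) → ℝ) (lam : (Σ ℓ : Fin n, I ℓ) → ℝ)
    (ℓ : Fin n) (j : I ℓ) : ℝ :=
  ∑ k : ∀ m, I m, if k ℓ = j ∧ X k = -1 then
    Q k * Real.exp (∑ m ∈ Finset.univ.erase ℓ, lam ⟨m, k m⟩) else 0

/-- One coordinate update of the generalized Sinkhorn algorithm: the dual variable at
coordinate `c = ⟨ℓ, j⟩` is set so that `e^{−λ^{(ℓ)}_j} = G(S⁺_{ℓ,j}, S⁻_{ℓ,j}, p^{(ℓ)}_j)`,
i.e. `λ^{(ℓ)}_j = −log G(S⁺_{ℓ,j}, S⁻_{ℓ,j}, p^{(ℓ)}_j)`; this is the unique maximizer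
of the dual functional in that coordinate, with all other coordinates held fixed. -/
def gsUpdate [∀ ℓ, Fintype (I ℓ)] [∀ ℓ, DecidableEq (I ℓ)]
    (Q X : (∀ ℓ, I ℓ) → ℝ) (p : ∀ ℓ, I ℓ → ℝ)
    (lam : (Σ ℓ : Fin n, I ℓ) → ℝ) (c : Σ ℓ : Fin n, I ℓ) :
    (Σ ℓ : Fin n, I ℓ) → ℝ :=
  Function.update lam c
    (-Real.log (GSink (Splus Q X lam c.1 c.2) (Sminus Q X lam c.1 c.2) (p c.1 c.2)))

/-- One sweep of the generalized Sinkhorn algorithm: the coordinates are updated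
cyclically in the fixed order given by the list `ord`. -/
def gsSweep [∀ ℓ, Fintype (I ℓ)] [∀ ℓ, DecidableEq (I ℓ)]
    (Q X : (∀ ℓ, I ℓ) → ℝ) (p : ∀ ℓ, I ℓ → ℝ)
    (ord : List (Σ ℓ : Fin n, I ℓ)) (lam : (Σ ℓ : Fin n, I ℓ) → ℝ) :
    (Σ ℓ : Fin n, I ℓ) → ℝ :=
  ord.foldl (fun l c => gsUpdate Q X p l c) lam

/-!
With a strictly positive feasible array `P`, the dual functional is `g(λ) = -F(λ ᵥ* D)` for the
separable convex function `F(u) = Σ_k (Q_k e^{-u_k} + P_k u_k)` and the signed marginal matrix `D`,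
and each Sinkhorn update minimizes `F(λ ᵥ* D)` exactly in one coordinate. All iterates stay in a
sublevel set of `F`, which confines `u` to a box; there `F` is strongly convex with some modulus
`μ` and its gradient is Lipschitz with some constant `L`. In one sweep the decrease of `F`
dominates `μ/2` times the sum of the squared steps, while each partial derivative at the start of
the sweep is at most `L` times the motion before its own coordinate is re-optimized. An
open-mapping bound for `γ ↦ γ ᵥ* D` turns strong convexity into
`F(λ) - F* ≤ C · (F(λ) - F(sweep λ))`, so the optimality gap contracts by `1 - 1/C` per sweep.
-/

open Real Matrix

namespace Real

lemma exp_neg_tangent_le (a b : ℝ) : exp (-b) - exp (-b) * (a - b) ≤ exp (-a) := by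
  have h := mul_le_mul_of_nonneg_left (add_one_le_exp (b - a)) (exp_pos (-b)).le
  rw [← exp_add, show -b + (b - a) = -a by ring] at h
  linarith

lemma sq_div_two_le_one_add_sub_one_mul_exp {r : ℝ} (hr : 0 ≤ r) :
    r ^ 2 / 2 ≤ 1 + (r - 1) * exp r := by
  have hmono : Monotone fun x => 1 + (x - 1) * exp x - x ^ 2 / 2 := by
    refine monotone_of_hasDerivAt_nonneg (f' := fun x => x * (exp x - 1)) (fun x => ?_) fun x => ?_
    · exact ((((hasDerivAt_id' x).sub_const 1).mul (hasDerivAt_exp x)).const_add 1).sub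
        ((hasDerivAt_pow 2 x).div_const 2) |>.congr_deriv (by push_cast; ring)
    · rcases le_total 0 x with hx | hx
      · exact mul_nonneg hx (by linarith [one_le_exp hx])
      · exact mul_nonneg_of_nonpos_of_nonpos hx (by linarith [exp_le_one_iff.2 hx])
  have := hmono hr
  norm_num at this
  linarith

lemma exp_neg_strong_tangent_le {a b M : ℝ} (ha : a ≤ M) (hb : b ≤ M) :
    exp (-b) - exp (-b) * (a - b) + exp (-M) / 2 * (a - b) ^ 2 ≤ exp (-a) := by
  rcases le_total a b with hab | hab
  · have h := mul_le_mul_of_nonneg_left (quadratic_le_exp_of_nonneg (sub_nonneg.2 hab))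
      (exp_pos (-b)).le
    rw [← exp_add, show -b + (b - a) = -a by ring] at h
    have hM : exp (-M) ≤ exp (-b) := exp_le_exp.2 (by linarith)
    nlinarith [sq_nonneg (a - b)]
  · have h := mul_le_mul_of_nonneg_left (sq_div_two_le_one_add_sub_one_mul_exp (sub_nonneg.2 hab))
      (exp_pos (-a)).le
    have he : exp (-a) * exp (a - b) = exp (-b) := by rw [← exp_add]; ring_nf
    have hM : exp (-M) ≤ exp (-a) := exp_le_exp.2 (by linarith)
    nlinarith [sq_nonneg (a - b)]

lemma abs_exp_neg_sub_exp_neg_le {a b m : ℝ} (ha : m ≤ a) (hb : m ≤ b) :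
    |exp (-a) - exp (-b)| ≤ exp (-m) * |a - b| := by
  wlog hab : a ≤ b generalizing a b
  · rw [abs_sub_comm, abs_sub_comm a]; exact this hb ha (le_of_not_ge hab)
  have h := exp_neg_tangent_le b a
  have hm : exp (-a) ≤ exp (-m) := exp_le_exp.2 (by linarith)
  rw [abs_of_nonneg (by linarith [exp_le_exp.2 (neg_le_neg hab)]), abs_of_nonpos (by linarith)]
  nlinarith

-- `b` comes from the tangent line of slope `-p` to `q e^{-x}`
lemma exists_le_mul_exp_neg_add_mul {q p : ℝ} (hq : 0 < q) (hp : 0 < p) :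
    ∃ b, ∀ x, b ≤ q * exp (-x) + p * x := by
  refine ⟨p * (1 + log (q / p)), fun x => ?_⟩
  have h := mul_le_mul_of_nonneg_left (exp_neg_tangent_le x (log (q / p))) hq.le
  rw [exp_neg, exp_log (by positivity)] at h
  field_simp at h
  nlinarith

-- `m` comes from the tangent line of slope `-2p` to `q e^{-x}`
lemma exists_bounds_of_mul_exp_neg_add_mul_le {q p : ℝ} (hq : 0 < q) (hp : 0 < p) (H : ℝ) :
    ∃ m M, ∀ x, q * exp (-x) + p * x ≤ H → m ≤ x ∧ x ≤ M := by
  refine ⟨2 * (1 + log (q / (2 * p))) - H / p, H / p, fun x hx => ⟨?_, ?_⟩⟩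
  · have h := mul_le_mul_of_nonneg_left (exp_neg_tangent_le x (log (q / (2 * p)))) hq.le
    rw [exp_neg, exp_log (by positivity)] at h
    field_simp at h
    rw [sub_le_comm, le_div_iff₀ hp]
    nlinarith
  · rw [le_div_iff₀ hp]
    nlinarith [mul_pos hq (exp_pos (-x))]

end Real

lemma Finite.exists_pos_le {α : Type*} [Finite α] {f : α → ℝ} (hf : ∀ k, 0 < f k) :
    ∃ μ > 0, ∀ k, μ ≤ f k := by
  obtain ⟨μ, hμ⟩ := Finite.exists_ge fun k => (⟨f k, hf k⟩ : Set.Ioi (0 : ℝ))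
  exact ⟨μ, μ.2, hμ⟩

lemma sq_norm_le_sum_sq {α : Type*} [Fintype α] (x : α → ℝ) : ‖x‖ ^ 2 ≤ ∑ k, x k ^ 2 := by
  have hsum : 0 ≤ ∑ k, x k ^ 2 := Finset.sum_nonneg fun k _ => sq_nonneg _
  rw [← Real.le_sqrt (norm_nonneg _) hsum, pi_norm_le_iff_of_nonneg (sqrt_nonneg _)]
  exact fun k => abs_le_sqrt <|
    Finset.single_le_sum (f := fun k => x k ^ 2) (fun k _ => sq_nonneg _) (Finset.mem_univ k)

/-- The open mapping theorem for `γ ↦ γ ᵥ* D` onto its range. -/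
lemma Matrix.exists_vecMul_eq_norm_le {α ι : Type*} [Fintype α] [Fintype ι]
    (D : Matrix ι α ℝ) :
    ∃ κ > 0, ∀ γ₀ : ι → ℝ, ∃ γ, γ ᵥ* D = γ₀ ᵥ* D ∧ ‖γ‖ ≤ κ * ‖γ₀ ᵥ* D‖ := by
  let A := (vecMulLinear D).rangeRestrict.toContinuousLinearMap
  obtain ⟨κ, hκ, hA⟩ := A.exists_preimage_norm_le (LinearMap.surjective_rangeRestrict _)
  refine ⟨κ, hκ, fun γ₀ => ?_⟩
  obtain ⟨γ, hγ, hle⟩ := hA ⟨γ₀ ᵥ* D, γ₀, rfl⟩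
  exact ⟨γ, congrArg Subtype.val hγ, hle⟩

lemma Matrix.update_vecMul {α ι : Type*} [Fintype ι] [DecidableEq ι] (D : Matrix ι α ℝ)
    (lam : ι → ℝ) (c : ι) (s : ℝ) :
    Function.update lam c s ᵥ* D = lam ᵥ* D + (s - lam c) • D c := by
  rw [show Function.update lam c s = lam + Pi.single c (s - lam c) by
    ext i; rcases eq_or_ne i c with rfl | h <;> simp [*], add_vecMul, single_vecMul]
  rfl

-- the inductive step of the Cauchy–Schwarz bound `(Σ_{i<N} |s_i|)² ≤ N · Σ_{i<N} s_i²`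
lemma add_sq_le_succ_mul_add_sq {S T N t : ℝ} (hN : 0 ≤ N) (hT : 0 ≤ T) (h : S ^ 2 ≤ N * T) :
    (S + t) ^ 2 ≤ (N + 1) * (T + t ^ 2) := by
  rcases hN.eq_or_lt with rfl | hN
  · nlinarith
  · nlinarith [sq_nonneg (S - N * t), mul_pos hN hN]

lemma exists_le_mul_pow_of_le_mul_sub {e : ℕ → ℝ} {C : ℝ} (hC : 0 < C) (he : ∀ t, 0 ≤ e t)
    (h : ∀ t, e t ≤ C * (e t - e (t + 1))) : ∃ ρ, 0 ≤ ρ ∧ ρ < 1 ∧ ∀ t, e t ≤ e 0 * ρ ^ t := by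
  refine ⟨max (1 - C⁻¹) 0, le_max_right _ _, max_lt (by simpa using hC) one_pos, fun t => ?_⟩
  induction t with
  | zero => simp
  | succ t ih =>
    have hstep : e (t + 1) ≤ (1 - C⁻¹) * e t := by
      have h' := mul_le_mul_of_nonneg_left (h t) (inv_nonneg.2 hC.le)
      rw [inv_mul_cancel_left₀ hC.ne'] at h'
      linarith
    calc e (t + 1) ≤ max (1 - C⁻¹) 0 * e t :=
          hstep.trans (mul_le_mul_of_nonneg_right (le_max_left _ _) (he t))
      _ ≤ max (1 - C⁻¹) 0 * (e 0 * max (1 - C⁻¹) 0 ^ t) :=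
          mul_le_mul_of_nonneg_left ih (le_max_right _ _)
      _ = e 0 * max (1 - C⁻¹) 0 ^ (t + 1) := by ring

section ExpPotential

variable {α : Type*}

def expPotential [Fintype α] (Q P u : α → ℝ) : ℝ := ∑ k, (Q k * exp (-u k) + P k * u k)

def expPotentialGrad (Q P u : α → ℝ) : α → ℝ := fun k => P k - Q k * exp (-u k)

variable {Q P : α → ℝ}

lemma abs_expPotentialGrad_sub_le {m : ℝ} (hQ : ∀ k, 0 ≤ Q k) {u v : α → ℝ}
    (hu : ∀ k, m ≤ u k) (hv : ∀ k, m ≤ v k) (k : α) :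
    |expPotentialGrad Q P u k - expPotentialGrad Q P v k| ≤ Q k * exp (-m) * |u k - v k| := by
  have h := abs_exp_neg_sub_exp_neg_le (hv k) (hu k)
  rw [expPotentialGrad, expPotentialGrad, show P k - Q k * exp (-u k) - (P k - Q k * exp (-v k))
    = Q k * (exp (-v k) - exp (-u k)) by ring, abs_mul, abs_of_nonneg (hQ k), abs_sub_comm (u k),
    mul_assoc]
  exact mul_le_mul_of_nonneg_left h (hQ k)

variable [Fintype α]

lemma expPotential_add_dotProduct_grad_le (hQ : ∀ k, 0 ≤ Q k) (u v : α → ℝ) :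
    expPotential Q P v + (u - v) ⬝ᵥ expPotentialGrad Q P v ≤ expPotential Q P u := by
  simp only [expPotential, expPotentialGrad, dotProduct, Pi.sub_apply, ← Finset.sum_add_distrib]
  refine Finset.sum_le_sum fun k _ => ?_
  nlinarith [mul_le_mul_of_nonneg_left (exp_neg_tangent_le (u k) (v k)) (hQ k)]

lemma expPotential_add_dotProduct_grad_add_sq_le {μ M : ℝ} (hQ : ∀ k, 0 ≤ Q k)
    (hμ : ∀ k, μ ≤ Q k * exp (-M)) {u v : α → ℝ} (hu : ∀ k, u k ≤ M) (hv : ∀ k, v k ≤ M) :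
    expPotential Q P v + (u - v) ⬝ᵥ expPotentialGrad Q P v + μ / 2 * ∑ k, (u k - v k) ^ 2
      ≤ expPotential Q P u := by
  simp only [expPotential, expPotentialGrad, dotProduct, Pi.sub_apply, Finset.mul_sum,
    ← Finset.sum_add_distrib]
  refine Finset.sum_le_sum fun k _ => ?_
  have h := mul_le_mul_of_nonneg_left (exp_neg_strong_tangent_le (hu k) (hv k)) (hQ k)
  nlinarith [mul_le_mul_of_nonneg_right (hμ k) (sq_nonneg (u k - v k))]

lemma exists_bounds_of_expPotential_le (hQ : ∀ k, 0 < Q k) (hP : ∀ k, 0 < P k) (F₀ : ℝ) :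
    ∃ m M, ∀ u, expPotential Q P u ≤ F₀ → ∀ k, m ≤ u k ∧ u k ≤ M := by
  choose b hb using fun k => exists_le_mul_exp_neg_add_mul (hQ k) (hP k)
  choose m M hmM using fun k =>
    exists_bounds_of_mul_exp_neg_add_mul_le (hQ k) (hP k) (F₀ - ∑ k, b k + b k)
  obtain ⟨m₀, hm₀⟩ := Finite.exists_ge m
  obtain ⟨M₀, hM₀⟩ := Finite.exists_le M
  refine ⟨m₀, M₀, fun u hu k => ?_⟩
  have hterm : Q k * exp (-u k) + P k * u k - b k ≤ expPotential Q P u - ∑ k, b k := by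
    rw [expPotential, ← Finset.sum_sub_distrib]
    exact Finset.single_le_sum (f := fun k => Q k * exp (-u k) + P k * u k - b k)
      (fun k _ => sub_nonneg.2 (hb k (u k))) (Finset.mem_univ k)
  obtain ⟨hmk, hMk⟩ := hmM k (u k) (by linarith)
  exact ⟨(hm₀ k).trans hmk, hMk.trans (hM₀ k)⟩

end ExpPotential

section CoordinateDescent

variable {α ι : Type*} [Fintype α] {Q P : α → ℝ}

lemma expPotential_add_smul_le (hQ : ∀ k, 0 ≤ Q k) {u d : α → ℝ} {τ : ℝ}
    (hτ : d ⬝ᵥ expPotentialGrad Q P (u + τ • d) = 0) :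
    expPotential Q P (u + τ • d) ≤ expPotential Q P u := by
  have h := expPotential_add_dotProduct_grad_le (P := P) hQ u (u + τ • d)
  rwa [sub_add_cancel_left, neg_dotProduct, smul_dotProduct, hτ, smul_zero, neg_zero,
    add_zero] at h

lemma sq_mul_le_expPotential_sub_add_smul {μ M : ℝ} (hQ : ∀ k, 0 ≤ Q k)
    (hμ : ∀ k, μ ≤ Q k * exp (-M)) {u d : α → ℝ} {τ : ℝ} (hu : ∀ k, u k ≤ M)
    (huτ : ∀ k, (u + τ • d) k ≤ M) (hτ : d ⬝ᵥ expPotentialGrad Q P (u + τ • d) = 0) :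
    μ / 2 * τ ^ 2 * ∑ k, d k ^ 2 ≤ expPotential Q P u - expPotential Q P (u + τ • d) := by
  have h := expPotential_add_dotProduct_grad_add_sq_le (P := P) hQ hμ hu huτ
  rw [sub_add_cancel_left, neg_dotProduct, smul_dotProduct, hτ, smul_zero, neg_zero,
    add_zero] at h
  simp only [Pi.add_apply, Pi.smul_apply, smul_eq_mul, sub_add_cancel_left, neg_sq, mul_pow,
    ← Finset.mul_sum] at h
  linarith

lemma abs_dotProduct_expPotentialGrad_sub_add_smul_le {m L τ : ℝ} (hQ : ∀ k, 0 ≤ Q k)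
    (hL : ∀ k, Q k * exp (-m) ≤ L) {d e u : α → ℝ} (hd : ∀ k, |d k| ≤ 1) (he : ∀ k, |e k| ≤ 1)
    (hu : ∀ k, m ≤ u k) (huτ : ∀ k, m ≤ (u + τ • e) k) :
    |d ⬝ᵥ expPotentialGrad Q P u - d ⬝ᵥ expPotentialGrad Q P (u + τ • e)|
      ≤ L * Fintype.card α * |τ| := by
  have hterm : ∀ k, |d k * (expPotentialGrad Q P u k - expPotentialGrad Q P (u + τ • e) k)|
      ≤ L * |τ| := fun k => by
    have hstep : |u k - (u + τ • e) k| ≤ |τ| := by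
      simpa [abs_mul] using mul_le_of_le_one_right (abs_nonneg τ) (he k)
    have hgrad := (abs_expPotentialGrad_sub_le (P := P) hQ hu huτ k).trans
      (mul_le_mul_of_nonneg_left hstep (mul_nonneg (hQ k) (exp_pos _).le))
    rw [abs_mul]
    calc |d k| * |expPotentialGrad Q P u k - expPotentialGrad Q P (u + τ • e) k|
        ≤ 1 * (Q k * exp (-m) * |τ|) := mul_le_mul (hd k) hgrad (abs_nonneg _) zero_le_one
      _ ≤ L * |τ| := by rw [one_mul]; exact mul_le_mul_of_nonneg_right (hL k) (abs_nonneg _)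
  rw [← dotProduct_sub]
  calc _ ≤ ∑ _k : α, L * |τ| :=
        (Finset.abs_sum_le_sum_abs _ _).trans (Finset.sum_le_sum fun k _ => hterm k)
    _ = L * Fintype.card α * |τ| := by
        simp only [Finset.sum_const, Finset.card_univ, nsmul_eq_mul]; ring

variable [Fintype ι] {D : Matrix ι α ℝ}

lemma expPotential_sub_le_of_abs_dotProduct_grad_le {μ M κ B : ℝ} (hQ : ∀ k, 0 ≤ Q k)
    (hμ : 0 < μ) (hμM : ∀ k, μ ≤ Q k * exp (-M))
    (hκ : ∀ γ₀ : ι → ℝ, ∃ γ, γ ᵥ* D = γ₀ ᵥ* D ∧ ‖γ‖ ≤ κ * ‖γ₀ ᵥ* D‖) (hB : 0 ≤ B)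
    {lam lam' : ι → ℝ} (hlam : ∀ k, (lam ᵥ* D) k ≤ M) (hlam' : ∀ k, (lam' ᵥ* D) k ≤ M)
    (hgrad : ∀ c, |D c ⬝ᵥ expPotentialGrad Q P (lam ᵥ* D)| ≤ B) :
    expPotential Q P (lam ᵥ* D) - expPotential Q P (lam' ᵥ* D)
      ≤ (Fintype.card ι * κ * B) ^ 2 / (2 * μ) := by
  -- strong convexity from `lam` to `lam'`, with the linear term estimated through a
  -- preimage `γ` of `(lam' - lam) ᵥ* D` of controlled norm
  obtain ⟨γ, hγ, hγκ⟩ := hκ (lam' - lam)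
  set w := ‖(lam' - lam) ᵥ* D‖
  have hconv := expPotential_add_dotProduct_grad_add_sq_le (P := P) hQ hμM hlam' hlam
  have hlin : |(lam' ᵥ* D - lam ᵥ* D) ⬝ᵥ expPotentialGrad Q P (lam ᵥ* D)|
      ≤ Fintype.card ι * κ * B * w := by
    rw [← sub_vecMul, ← hγ, ← dotProduct_mulVec]
    calc |γ ⬝ᵥ (D *ᵥ expPotentialGrad Q P (lam ᵥ* D))| ≤ ∑ c, |γ c| * B :=
          (Finset.abs_sum_le_sum_abs _ _).trans <| Finset.sum_le_sum fun c _ => by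
            rw [abs_mul]; exact mul_le_mul_of_nonneg_left (hgrad c) (abs_nonneg _)
      _ ≤ ∑ _c : ι, κ * w * B := Finset.sum_le_sum fun c _ =>
          mul_le_mul_of_nonneg_right ((norm_le_pi_norm γ c).trans hγκ) hB
      _ = Fintype.card ι * κ * B * w := by
          simp only [Finset.sum_const, Finset.card_univ, nsmul_eq_mul]; ring
  have hsq : w ^ 2 ≤ ∑ k, ((lam' ᵥ* D) k - (lam ᵥ* D) k) ^ 2 := by
    simpa only [w, sub_vecMul, Pi.sub_apply] using sq_norm_le_sum_sq ((lam' - lam) ᵥ* D)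
  have hquad : expPotential Q P (lam ᵥ* D) - expPotential Q P (lam' ᵥ* D)
      ≤ Fintype.card ι * κ * B * w - μ / 2 * w ^ 2 := by
    nlinarith [neg_abs_le ((lam' ᵥ* D - lam ᵥ* D) ⬝ᵥ expPotentialGrad Q P (lam ᵥ* D)),
      mul_le_mul_of_nonneg_left hsq (by positivity : 0 ≤ μ / 2)]
  rw [le_div_iff₀ (by positivity)]
  nlinarith [sq_nonneg (Fintype.card ι * κ * B - μ * w)]

variable [DecidableEq ι] {U : (ι → ℝ) → ι → ι → ℝ}

variable (Q P D) in
/-- By convexity, this says that `lam'` minimizes `γ ↦ F(γ ᵥ* D)` on the line through `lam` in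
the coordinate direction `c`. -/
def IsCoordMinimizer (lam lam' : ι → ℝ) (c : ι) : Prop :=
  (∃ s, lam' = Function.update lam c s) ∧ D c ⬝ᵥ expPotentialGrad Q P (lam' ᵥ* D) = 0

lemma IsCoordMinimizer.exists_step {lam lam' : ι → ℝ} {c : ι}
    (h : IsCoordMinimizer Q P D lam lam' c) :
    ∃ τ : ℝ, lam' ᵥ* D = lam ᵥ* D + τ • D c ∧
      D c ⬝ᵥ expPotentialGrad Q P (lam ᵥ* D + τ • D c) = 0 := by
  obtain ⟨⟨s, rfl⟩, h0⟩ := h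
  rw [Matrix.update_vecMul] at h0 ⊢
  exact ⟨_, rfl, h0⟩

lemma expPotential_foldl_le (hQ : ∀ k, 0 ≤ Q k)
    (hU : ∀ lam c, IsCoordMinimizer Q P D lam (U lam c) c) (l : List ι) (lam : ι → ℝ) :
    expPotential Q P (l.foldl U lam ᵥ* D) ≤ expPotential Q P (lam ᵥ* D) := by
  induction l generalizing lam with
  | nil => exact le_rfl
  | cons c l ih =>
    obtain ⟨τ, hstep, hτ⟩ := (hU lam c).exists_step
    exact (ih _).trans (hstep ▸ expPotential_add_smul_le hQ hτ)

/-- `S` and `T` bound the sum of the absolute steps of the sweep and of their squares. Each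
partial derivative vanishes right after its own coordinate step, so at the start of the sweep it
is at most `L · |α| · S`. -/
theorem exists_sweep_bounds {F₀ m M μ L : ℝ} (hQ : ∀ k, 0 ≤ Q k) (hD : ∀ c k, |D c k| ≤ 1)
    (hrow : ∀ c, 1 ≤ ∑ k, D c k ^ 2) (hU : ∀ lam c, IsCoordMinimizer Q P D lam (U lam c) c)
    (hbox : ∀ u, expPotential Q P u ≤ F₀ → ∀ k, m ≤ u k ∧ u k ≤ M)
    (hμ : 0 ≤ μ) (hμM : ∀ k, μ ≤ Q k * exp (-M)) (hL : 0 ≤ L) (hLm : ∀ k, Q k * exp (-m) ≤ L)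
    (l : List ι) (lam : ι → ℝ) (hlam : expPotential Q P (lam ᵥ* D) ≤ F₀) :
    ∃ S T : ℝ, 0 ≤ S ∧ 0 ≤ T ∧ S ^ 2 ≤ l.length * T ∧
      μ / 2 * T ≤ expPotential Q P (lam ᵥ* D) - expPotential Q P (l.foldl U lam ᵥ* D) ∧
      ∀ c ∈ l, |D c ⬝ᵥ expPotentialGrad Q P (lam ᵥ* D)| ≤ L * Fintype.card α * S := by
  induction l generalizing lam with
  | nil => exact ⟨0, 0, le_rfl, le_rfl, by simp, by simp, by simp⟩
  | cons c l ih =>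
    obtain ⟨τ, hstep, hτ⟩ := (hU lam c).exists_step
    have hdesc := expPotential_add_smul_le hQ hτ
    rw [← hstep] at hdesc
    obtain ⟨S, T, hS, hT, hST, hdec, hgrad⟩ := ih (U lam c) (hdesc.trans hlam)
    have hbox₀ := hbox _ hlam
    have hbox₁ := hbox _ (hdesc.trans hlam)
    rw [hstep] at hbox₁
    have hdec₁ : μ / 2 * τ ^ 2 ≤
        expPotential Q P (lam ᵥ* D) - expPotential Q P (U lam c ᵥ* D) := by
      have h := sq_mul_le_expPotential_sub_add_smul hQ hμM (fun k => (hbox₀ k).2)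
        (fun k => (hbox₁ k).2) hτ
      rw [← hstep] at h
      nlinarith [mul_le_mul_of_nonneg_left (hrow c) (by positivity : 0 ≤ μ / 2 * τ ^ 2)]
    have hmove : ∀ c', |D c' ⬝ᵥ expPotentialGrad Q P (lam ᵥ* D) -
        D c' ⬝ᵥ expPotentialGrad Q P (U lam c ᵥ* D)| ≤ L * Fintype.card α * |τ| := fun c' => by
      rw [hstep]
      exact abs_dotProduct_expPotentialGrad_sub_add_smul_le hQ hLm (hD c') (hD c)
        (fun k => (hbox₀ k).1) (fun k => (hbox₁ k).1)
    refine ⟨S + |τ|, T + τ ^ 2, by positivity, by positivity, ?_, ?_, fun c' hc' => ?_⟩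
    · rw [List.length_cons, Nat.cast_succ, ← sq_abs τ]
      exact add_sq_le_succ_mul_add_sq (Nat.cast_nonneg _) hT hST
    · rw [List.foldl_cons]
      linarith
    · have hgrad₁ : |D c' ⬝ᵥ expPotentialGrad Q P (U lam c ᵥ* D)| ≤ L * Fintype.card α * S := by
        rcases List.mem_cons.1 hc' with rfl | hc'
        · rw [hstep, hτ, abs_zero]
          positivity
        · exact hgrad c' hc'
      have := abs_sub_abs_le_abs_sub (D c' ⬝ᵥ expPotentialGrad Q P (lam ᵥ* D))
        (D c' ⬝ᵥ expPotentialGrad Q P (U lam c ᵥ* D))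
      linarith [hmove c']

theorem exists_sub_le_mul_sweep_decrease (hQ : ∀ k, 0 < Q k) (hP : ∀ k, 0 < P k)
    (hD : ∀ c k, |D c k| ≤ 1) (hrow : ∀ c, 1 ≤ ∑ k, D c k ^ 2)
    (hU : ∀ lam c, IsCoordMinimizer Q P D lam (U lam c) c) {ord : List ι} (hord : ∀ c, c ∈ ord)
    {lamStar : ι → ℝ} (hmin : ∀ lam, expPotential Q P (lamStar ᵥ* D) ≤ expPotential Q P (lam ᵥ* D))
    (F₀ : ℝ) :
    ∃ C > 0, ∀ lam, expPotential Q P (lam ᵥ* D) ≤ F₀ →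
      expPotential Q P (lam ᵥ* D) - expPotential Q P (lamStar ᵥ* D)
        ≤ C * (expPotential Q P (lam ᵥ* D) - expPotential Q P (ord.foldl U lam ᵥ* D)) := by
  have hQ₀ : ∀ k, 0 ≤ Q k := fun k => (hQ k).le
  obtain ⟨m, M, hbox⟩ := exists_bounds_of_expPotential_le hQ hP F₀
  obtain ⟨μ, hμ, hμM⟩ := Finite.exists_pos_le fun k => mul_pos (hQ k) (exp_pos (-M))
  obtain ⟨L, hLm⟩ := Finite.exists_le fun k => Q k * exp (-m)
  obtain ⟨κ, hκ, hκD⟩ := D.exists_vecMul_eq_norm_le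
  set K := Fintype.card ι * κ * (max L 0 * Fintype.card α)
  refine ⟨K ^ 2 * ord.length / μ ^ 2 + 1, by positivity, fun lam hlam => ?_⟩
  obtain ⟨S, T, hS, hT, hST, hdec, hgrad⟩ := exists_sweep_bounds hQ₀ hD hrow hU hbox hμ.le hμM
    (le_max_right L 0) (fun k => le_max_of_le_left (hLm k)) ord lam hlam
  have hopt := expPotential_sub_le_of_abs_dotProduct_grad_le (lam' := lamStar) hQ₀ hμ hμM hκD
    (by positivity) (fun k => (hbox _ hlam k).2) (fun k => (hbox _ ((hmin lam).trans hlam) k).2)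
    fun c => hgrad c (hord c)
  have hsweep := expPotential_foldl_le hQ₀ hU ord lam
  set ΔF := expPotential Q P (lam ᵥ* D) - expPotential Q P (ord.foldl U lam ᵥ* D)
  have hTΔ : T ≤ 2 / μ * ΔF := by
    rw [div_mul_eq_mul_div, le_div_iff₀ hμ]
    linarith
  calc expPotential Q P (lam ᵥ* D) - expPotential Q P (lamStar ᵥ* D)
      ≤ K ^ 2 * S ^ 2 / (2 * μ) := hopt.trans_eq (by ring)
    _ ≤ K ^ 2 * (ord.length * (2 / μ * ΔF)) / (2 * μ) := by
        gcongr
        exact hST.trans (mul_le_mul_of_nonneg_left hTΔ (Nat.cast_nonneg _))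
    _ = K ^ 2 * ord.length / μ ^ 2 * ΔF := by field_simp
    _ ≤ (K ^ 2 * ord.length / μ ^ 2 + 1) * ΔF := by nlinarith

theorem expPotential_cyclic_coordinate_descent_linear_rate (hQ : ∀ k, 0 < Q k)
    (hP : ∀ k, 0 < P k) (hD : ∀ c k, |D c k| ≤ 1) (hrow : ∀ c, 1 ≤ ∑ k, D c k ^ 2)
    (hU : ∀ lam c, IsCoordMinimizer Q P D lam (U lam c) c) {ord : List ι} (hord : ∀ c, c ∈ ord)
    {lamStar : ι → ℝ} (hmin : ∀ lam, expPotential Q P (lamStar ᵥ* D) ≤ expPotential Q P (lam ᵥ* D))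
    {lamSeq : ℕ → ι → ℝ} (hseq : ∀ t, lamSeq (t + 1) = ord.foldl U (lamSeq t)) :
    ∃ ρ, 0 ≤ ρ ∧ ρ < 1 ∧ ∀ t,
      expPotential Q P (lamSeq t ᵥ* D) - expPotential Q P (lamStar ᵥ* D)
        ≤ (expPotential Q P (lamSeq 0 ᵥ* D) - expPotential Q P (lamStar ᵥ* D)) * ρ ^ t := by
  have hmono : ∀ t, expPotential Q P (lamSeq t ᵥ* D) ≤ expPotential Q P (lamSeq 0 ᵥ* D) := by
    intro t
    induction t with
    | zero => exact le_rfl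
    | succ t ih => exact (hseq t ▸ expPotential_foldl_le (fun k => (hQ k).le) hU ord _).trans ih
  obtain ⟨C, hC, hcontr⟩ :=
    exists_sub_le_mul_sweep_decrease hQ hP hD hrow hU hord hmin (expPotential Q P (lamSeq 0 ᵥ* D))
  exact exists_le_mul_pow_of_le_mul_sub hC (fun t => sub_nonneg.2 (hmin _)) fun t => by
    rw [hseq, sub_sub_sub_cancel_right]
    exact hcontr _ (hmono t)

end CoordinateDescent

lemma GSink_pos {Sp Sm p : ℝ} (hSp : 0 < Sp) (hSm : 0 ≤ Sm) (hp : 0 < p) :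
    0 < GSink Sp Sm p := by
  unfold GSink
  positivity

lemma GSink_root {Sp Sm p : ℝ} (hSp : 0 < Sp) (hSm : 0 ≤ Sm) (hp : 0 < p) :
    Sp * GSink Sp Sm p - Sm * (GSink Sp Sm p)⁻¹ = p := by
  have hG := GSink_pos hSp hSm hp
  have hr := sq_sqrt (by positivity : 0 ≤ p ^ 2 + 4 * Sp * Sm)
  rw [sub_eq_iff_eq_add, ← sub_eq_iff_eq_add', eq_comm, ← mul_right_inj' hG.ne']
  unfold GSink at hG ⊢
  field_simp
  nlinarith [hr]

section Sinkhorn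

variable [∀ ℓ, DecidableEq (I ℓ)]

/-- The signed marginal constraints read `D *ᵥ P = p`, and `(λ ᵥ* D)_k = X_k Σ_ℓ λ^{(ℓ)}_{k_ℓ}`
is the exponent in the dual functional. -/
def signedMarginalMatrix (X : (∀ ℓ, I ℓ) → ℝ) : Matrix (Σ ℓ : Fin n, I ℓ) (∀ ℓ, I ℓ) ℝ :=
  fun c k => if k c.1 = c.2 then X k else 0

variable {Q X P : (∀ ℓ, I ℓ) → ℝ} {p : ∀ ℓ, I ℓ → ℝ}

lemma abs_signedMarginalMatrix_le_one (hX : ∀ k, X k = 1 ∨ X k = -1) (c k) :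
    |signedMarginalMatrix X c k| ≤ 1 := by
  unfold signedMarginalMatrix
  split_ifs <;> rcases hX k with h | h <;> simp [h]

lemma sum_update_of_apply_eq (lam : (Σ ℓ : Fin n, I ℓ) → ℝ) {c : Σ ℓ : Fin n, I ℓ} (s : ℝ)
    {k : ∀ ℓ, I ℓ} (hk : k c.1 = c.2) :
    ∑ ℓ, Function.update lam c s ⟨ℓ, k ℓ⟩ = s + ∑ m ∈ Finset.univ.erase c.1, lam ⟨m, k m⟩ := by
  obtain ⟨ℓ, j⟩ := c
  dsimp only at hk
  subst hk
  rw [← Finset.add_sum_erase _ _ (Finset.mem_univ ℓ), Function.update_self]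
  congr 1
  refine Finset.sum_congr rfl fun m hm => Function.update_of_ne ?_ _ _
  exact fun h => Finset.ne_of_mem_erase hm (congrArg Sigma.fst h)

variable [∀ ℓ, Fintype (I ℓ)]

lemma vecMul_signedMarginalMatrix (lam : (Σ ℓ : Fin n, I ℓ) → ℝ) (k : ∀ ℓ, I ℓ) :
    (lam ᵥ* signedMarginalMatrix X) k = X k * ∑ ℓ, lam ⟨ℓ, k ℓ⟩ := by
  simp only [vecMul, dotProduct, signedMarginalMatrix, Fintype.sum_sigma, mul_ite, mul_zero,
    Finset.sum_ite_eq, Finset.mem_univ, if_true, Finset.mul_sum]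
  exact Finset.sum_congr rfl fun ℓ _ => mul_comm _ _

lemma signedMarginalMatrix_mulVec
    (hPm : ∀ ℓ j, ∑ k : ∀ ℓ, I ℓ, (if k ℓ = j then X k * P k else 0) = p ℓ j)
    (c : Σ ℓ : Fin n, I ℓ) : (signedMarginalMatrix X *ᵥ P) c = p c.1 c.2 := by
  rw [← hPm]
  simp only [mulVec, dotProduct, signedMarginalMatrix, ite_mul, zero_mul]

lemma dualG_eq_neg_expPotential
    (hDP : ∀ c, (signedMarginalMatrix X *ᵥ P) c = p c.1 c.2)
    (lam : (Σ ℓ : Fin n, I ℓ) → ℝ) :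
    dualG Q X p lam = -expPotential Q P (lam ᵥ* signedMarginalMatrix X) := by
  have hlin : ∑ ℓ, ∑ j, lam ⟨ℓ, j⟩ * p ℓ j = (lam ᵥ* signedMarginalMatrix X) ⬝ᵥ P := by
    rw [← dotProduct_mulVec, dotProduct, Fintype.sum_sigma]
    simp only [hDP]
  rw [dualG, hlin, expPotential, Finset.sum_add_distrib, dotProduct]
  simp only [vecMul_signedMarginalMatrix, neg_mul, mul_comm (P _)]
  ring

lemma exists_apply_eq_and_eq_one (hX : ∀ k, X k = 1 ∨ X k = -1) (hP : ∀ k, 0 ≤ P k)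
    (hDP : ∀ c, (signedMarginalMatrix X *ᵥ P) c = p c.1 c.2) (hp : ∀ ℓ j, 0 < p ℓ j)
    (c : Σ ℓ : Fin n, I ℓ) : ∃ k : ∀ ℓ, I ℓ, k c.1 = c.2 ∧ X k = 1 := by
  by_contra! h
  have hle : (signedMarginalMatrix X *ᵥ P) c ≤ 0 :=
    Finset.sum_nonpos fun k _ => by
      simp only [signedMarginalMatrix]
      split_ifs with hk
      · rw [(hX k).resolve_left (h k hk), neg_one_mul, neg_nonpos]; exact hP k
      · rw [zero_mul]
  linarith [hDP c, hp c.1 c.2]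

lemma one_le_sum_sq_signedMarginalMatrix (hX : ∀ k, X k = 1 ∨ X k = -1) (hP : ∀ k, 0 ≤ P k)
    (hDP : ∀ c, (signedMarginalMatrix X *ᵥ P) c = p c.1 c.2)
    (hp : ∀ ℓ j, 0 < p ℓ j) (c : Σ ℓ : Fin n, I ℓ) :
    1 ≤ ∑ k, signedMarginalMatrix X c k ^ 2 := by
  obtain ⟨k, hk, hXk⟩ := exists_apply_eq_and_eq_one hX hP hDP hp c
  refine le_of_eq_of_le ?_ (Finset.single_le_sum (fun k _ => sq_nonneg _) (Finset.mem_univ k))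
  simp [signedMarginalMatrix, hk, hXk]

lemma Splus_pos (hQ : ∀ k, 0 < Q k) (hX : ∀ k, X k = 1 ∨ X k = -1) (hP : ∀ k, 0 ≤ P k)
    (hDP : ∀ c, (signedMarginalMatrix X *ᵥ P) c = p c.1 c.2)
    (hp : ∀ ℓ j, 0 < p ℓ j) (lam : (Σ ℓ : Fin n, I ℓ) → ℝ) (c : Σ ℓ : Fin n, I ℓ) :
    0 < Splus Q X lam c.1 c.2 := by
  obtain ⟨k, hk⟩ := exists_apply_eq_and_eq_one hX hP hDP hp c
  refine Finset.sum_pos' (fun k _ => ?_) ⟨k, Finset.mem_univ k, by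
    rw [if_pos hk]; exact mul_pos (hQ k) (exp_pos _)⟩
  split_ifs
  exacts [(mul_pos (hQ k) (exp_pos _)).le, le_rfl]

lemma Sminus_nonneg (hQ : ∀ k, 0 < Q k) (lam : (Σ ℓ : Fin n, I ℓ) → ℝ) (ℓ : Fin n) (j : I ℓ) :
    0 ≤ Sminus Q X lam ℓ j :=
  Finset.sum_nonneg fun k _ => by
    split_ifs
    exacts [(mul_pos (hQ k) (exp_pos _)).le, le_rfl]

lemma signedMarginalMatrix_dotProduct_mul_exp_update (hX : ∀ k, X k = 1 ∨ X k = -1)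
    (lam : (Σ ℓ : Fin n, I ℓ) → ℝ) (c : Σ ℓ : Fin n, I ℓ) (s : ℝ) :
    ∑ k, signedMarginalMatrix X c k *
        (Q k * exp (-(Function.update lam c s ᵥ* signedMarginalMatrix X) k))
      = Splus Q X lam c.1 c.2 * exp (-s) - Sminus Q X lam c.1 c.2 * exp s := by
  rw [Splus, Sminus, Finset.sum_mul, Finset.sum_mul, ← Finset.sum_sub_distrib]
  refine Finset.sum_congr rfl fun k _ => ?_
  rw [vecMul_signedMarginalMatrix, signedMarginalMatrix]
  by_cases hk : k c.1 = c.2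
  · rw [sum_update_of_apply_eq lam s hk, if_pos hk]
    set R := ∑ m ∈ Finset.univ.erase c.1, lam ⟨m, k m⟩
    rcases hX k with h | h
    · rw [if_pos ⟨hk, h⟩, if_neg (by norm_num [h]), h, show -(1 * (s + R)) = -R + -s by ring,
        exp_add]
      ring
    · rw [if_neg (by norm_num [h]), if_pos ⟨hk, h⟩, h, show -(-1 * (s + R)) = R + s by ring,
        exp_add]
      ring
  · simp [hk]

lemma gsUpdate_isCoordMinimizer (hQ : ∀ k, 0 < Q k) (hX : ∀ k, X k = 1 ∨ X k = -1)
    (hP : ∀ k, 0 ≤ P k)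
    (hDP : ∀ c, (signedMarginalMatrix X *ᵥ P) c = p c.1 c.2)
    (hp : ∀ ℓ j, 0 < p ℓ j) (lam : (Σ ℓ : Fin n, I ℓ) → ℝ) (c : Σ ℓ : Fin n, I ℓ) :
    IsCoordMinimizer Q P (signedMarginalMatrix X) lam (gsUpdate Q X p lam c) c := by
  have hSp := Splus_pos hQ hX hP hDP hp lam c
  have hSm := Sminus_nonneg (X := X) hQ lam c.1 c.2
  have hG := GSink_pos hSp hSm (hp c.1 c.2)
  have hPc : ∑ k, signedMarginalMatrix X c k * P k = p c.1 c.2 := hDP c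
  refine ⟨⟨_, rfl⟩, ?_⟩
  simp only [dotProduct, expPotentialGrad, mul_sub, Finset.sum_sub_distrib]
  rw [gsUpdate, signedMarginalMatrix_dotProduct_mul_exp_update hX, neg_neg, exp_neg, exp_log hG,
    hPc, GSink_root hSp hSm (hp c.1 c.2), sub_self]

end Sinkhorn

theorem generalized_sinkhorn_linear_convergence_general
    (n : ℕ) (I : Fin n → Type)
    [∀ ℓ, Fintype (I ℓ)] [∀ ℓ, DecidableEq (I ℓ)]
    (Q : (∀ ℓ, I ℓ) → ℝ) (hQ : ∀ k, 0 < Q k)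
    (X : (∀ ℓ, I ℓ) → ℝ) (hX : ∀ k, X k = 1 ∨ X k = -1)
    (p : ∀ ℓ, I ℓ → ℝ) (hp : ∀ ℓ j, 0 < p ℓ j)
    (hslater : ∃ P : (∀ ℓ, I ℓ) → ℝ, (∀ k, 0 < P k) ∧
      ∀ (ℓ : Fin n) (j : I ℓ),
        ∑ k : ∀ ℓ, I ℓ, (if k ℓ = j then X k * P k else 0) = p ℓ j)
    (gstar : ℝ)
    (hgstar : ∃ lamM : (Σ ℓ : Fin n, I ℓ) → ℝ, dualG Q X p lamM = gstar ∧
      ∀ lam : (Σ ℓ : Fin n, I ℓ) → ℝ, dualG Q X p lam ≤ gstar)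
    (ord : List (Σ ℓ : Fin n, I ℓ)) (hord₂ : ∀ c, c ∈ ord)
    (lamseq : ℕ → ((Σ ℓ : Fin n, I ℓ) → ℝ))
    (hstep : ∀ t, lamseq (t + 1) = gsSweep Q X p ord (lamseq t)) :
    ∃ C : ℝ, 0 ≤ C ∧ ∃ ρ : ℝ, 0 ≤ ρ ∧ ρ < 1 ∧
      ∀ t : ℕ, gstar - dualG Q X p (lamseq t) ≤ C * ρ ^ t := by
  obtain ⟨P, hP, hPm⟩ := hslater
  obtain ⟨lamM, rfl, hmax⟩ := hgstar
  have hDP := signedMarginalMatrix_mulVec hPm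
  have hdual := dualG_eq_neg_expPotential (Q := Q) hDP
  have hP₀ : ∀ k, 0 ≤ P k := fun k => (hP k).le
  obtain ⟨ρ, hρ₀, hρ₁, hrate⟩ := expPotential_cyclic_coordinate_descent_linear_rate hQ hP
    (abs_signedMarginalMatrix_le_one hX) (one_le_sum_sq_signedMarginalMatrix hX hP₀ hDP hp)
    (gsUpdate_isCoordMinimizer hQ hX hP₀ hDP hp) hord₂ (lamStar := lamM)
    (fun lam => by simpa only [hdual, neg_le_neg_iff] using hmax lam) hstep
  refine ⟨dualG Q X p lamM - dualG Q X p (lamseq 0), sub_nonneg.2 (hmax _), ρ, hρ₀, hρ₁,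
    fun t => ?_⟩
  simpa only [hdual, neg_sub_neg] using hrate t

/-- Linear convergence of the generalized Sinkhorn algorithm: under
Slater's condition, with `g*` the attained maximum of the dual functional, the dual
values of the iterates produced by cyclic coordinate sweeps (in a fixed order visiting
each coordinate exactly once), from any starting point, converge to `g*` at a linear
rate: `g* − g(λ^{(t)}) ≤ C·ρ^t` for some `C ≥ 0` and `ρ ∈ [0, 1)`. -/
theorem generalized_sinkhorn_linear_convergence
    (n : ℕ) (hn : 1 ≤ n) (I : Fin n → Type)
    [∀ ℓ, Fintype (I ℓ)] [∀ ℓ, Nonempty (I ℓ)] [∀ ℓ, DecidableEq (I ℓ)]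
    (Q : (∀ ℓ, I ℓ) → ℝ) (hQ : ∀ k, 0 < Q k)
    (X : (∀ ℓ, I ℓ) → ℝ) (hX : ∀ k, X k = 1 ∨ X k = -1)
    (p : ∀ ℓ, I ℓ → ℝ) (hp : ∀ ℓ j, 0 < p ℓ j)
    (hslater : ∃ P : (∀ ℓ, I ℓ) → ℝ, (∀ k, 0 < P k) ∧
      ∀ (ℓ : Fin n) (j : I ℓ),
        ∑ k : ∀ ℓ, I ℓ, (if k ℓ = j then X k * P k else 0) = p ℓ j)
    (gstar : ℝ)
    (hgstar : ∃ lamM : (Σ ℓ : Fin n, I ℓ) → ℝ, dualG Q X p lamM = gstar ∧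
      ∀ lam : (Σ ℓ : Fin n, I ℓ) → ℝ, dualG Q X p lam ≤ gstar)
    (ord : List (Σ ℓ : Fin n, I ℓ)) (hord₁ : ord.Nodup) (hord₂ : ∀ c, c ∈ ord)
    (lamseq : ℕ → ((Σ ℓ : Fin n, I ℓ) → ℝ))
    (hstep : ∀ t, lamseq (t + 1) = gsSweep Q X p ord (lamseq t)) :
    ∃ C : ℝ, 0 ≤ C ∧ ∃ ρ : ℝ, 0 ≤ ρ ∧ ρ < 1 ∧
      ∀ t : ℕ, gstar - dualG Q X p (lamseq t) ≤ C * ρ ^ t :=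
  generalized_sinkhorn_linear_convergence_general n I Q hQ X hX p hp hslater gstar hgstar ord hord₂
    lamseq hstep

end
end
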